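/- arXiv:1903.05495 — 10 statements merged into one kernel-verified Lean document; each statement's English description precedes it below -/
import Mathlib

section
/- Let X and Y be disjoint sets, each of size m, where m ≥ 5. Then there exists a family F ⊆ binom(X,Y){2,2} that is two-sided intersecting and satisfies |F| ≥ 3m² − 10m + 10. -/
/-!
The family is of Hilton–Milner type. Fix `x ∈ X` and `T = A ∪ B` with `A ⊆ X \ {x}`, `B ⊆ Y`,
`|A| = |B| = 2`, and take `T` together with every member of `binom(X,Y){2,2}` that contains `x`
and meets `T`. Any two members meet (in `x`, or in `T`). Together with `T`, the members
`{x, x'} ∪ B` (for `x' ∉ A ∪ {x}`) and `{x, a} ∪ B'` (for `a ∈ A`, `B' ∩ B = ∅`) witness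
two-sidedness. The members containing `x` number `(m - 1) C(m, 2)`, of which those avoiding `T`
form the same star inside `X \ T`, `Y \ T`, so the family has
`(m - 1) C(m, 2) - (m - 3) C(m - 2, 2) + 1 = 3m² - 10m + 10` members.
-/

open Finset

section

variable {α : Type*} [DecidableEq α] {X Y A B S T : Finset α} {k l : ℕ} {x : α}

def bipartiteLayer (X Y : Finset α) (k l : ℕ) : Finset (Finset α) :=
  {S ∈ (X ∪ Y).powerset | #(S ∩ X) = k ∧ #(S ∩ Y) = l}

theorem mem_bipartiteLayer :
    S ∈ bipartiteLayer X Y k l ↔ S ⊆ X ∪ Y ∧ #(S ∩ X) = k ∧ #(S ∩ Y) = l := by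
  rw [bipartiteLayer, mem_filter, mem_powerset]

theorem union_inter_eq_left_of_disjoint (hA : A ⊆ X) (hB : B ⊆ Y) (hXY : Disjoint X Y) :
    (A ∪ B) ∩ X = A := by
  rw [union_inter_distrib_right, inter_eq_left.mpr hA,
    disjoint_iff_inter_eq_empty.mp (hXY.symm.mono_left hB), union_empty]

theorem union_inter_eq_right_of_disjoint (hA : A ⊆ X) (hB : B ⊆ Y) (hXY : Disjoint X Y) :
    (A ∪ B) ∩ Y = B := by
  rw [union_comm, union_inter_eq_left_of_disjoint hB hA hXY.symm]

theorem union_mem_bipartiteLayer (hA : A ⊆ X) (hB : B ⊆ Y) (hXY : Disjoint X Y) :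
    A ∪ B ∈ bipartiteLayer X Y #A #B :=
  mem_bipartiteLayer.mpr ⟨union_subset_union hA hB,
    by rw [union_inter_eq_left_of_disjoint hA hB hXY],
    by rw [union_inter_eq_right_of_disjoint hA hB hXY]⟩

theorem filter_disjoint_bipartiteLayer (X Y T : Finset α) (k l : ℕ) :
    {S ∈ bipartiteLayer X Y k l | Disjoint S T} = bipartiteLayer (X \ T) (Y \ T) k l := by
  ext S
  have inter_sdiff (Z : Finset α) (hST : Disjoint S T) : S ∩ (Z \ T) = S ∩ Z := by
    rw [← inter_sdiff_assoc, sdiff_eq_self_of_disjoint (hST.mono_left inter_subset_left)]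
  simp only [mem_filter, mem_bipartiteLayer, ← union_sdiff_distrib, subset_sdiff]
  constructor
  · rintro ⟨⟨hS, hk, hl⟩, hST⟩
    rw [inter_sdiff X hST, inter_sdiff Y hST]
    exact ⟨⟨hS, hST⟩, hk, hl⟩
  · rintro ⟨⟨hS, hST⟩, hk, hl⟩
    rw [inter_sdiff X hST, inter_sdiff Y hST] at *
    exact ⟨⟨hS, hk, hl⟩, hST⟩

theorem card_filter_mem_bipartiteLayer (hXY : Disjoint X Y) (hx : x ∈ X) :
    #{S ∈ bipartiteLayer X Y (k + 1) l | x ∈ S} = (#X - 1).choose k * (#Y).choose l := by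
  rw [← card_erase_of_mem hx, ← card_powersetCard, ← card_powersetCard, ← card_product]
  symm
  refine card_nbij' (fun p => insert x p.1 ∪ p.2) (fun S => ((S ∩ X).erase x, S ∩ Y))
    ?_ ?_ ?_ ?_
  · rintro ⟨A, B⟩ h
    simp only [coe_product, Set.mem_prod, mem_coe, mem_powersetCard, subset_erase] at h
    obtain ⟨⟨⟨hAX, hxA⟩, hA⟩, hBY, hB⟩ := h
    have hxAX : insert x A ⊆ X := insert_subset hx hAX
    simp only [coe_filter, Set.mem_ofPred_eq]
    refine ⟨?_, mem_union_left _ (mem_insert_self x A)⟩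
    rw [← hA, ← hB, ← card_insert_of_notMem hxA]
    exact union_mem_bipartiteLayer hxAX hBY hXY
  · intro S hS
    simp only [coe_filter, Set.mem_ofPred_eq, mem_bipartiteLayer] at hS
    obtain ⟨⟨-, hk, hl⟩, hxS⟩ := hS
    simp only [coe_product, Set.mem_prod, mem_coe, mem_powersetCard, subset_erase]
    refine ⟨⟨⟨(erase_subset _ _).trans inter_subset_right, notMem_erase x _⟩, ?_⟩,
      inter_subset_right, hl⟩
    rw [card_erase_of_mem (mem_inter.mpr ⟨hxS, hx⟩), hk, Nat.add_sub_cancel]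
  · rintro ⟨A, B⟩ h
    simp only [coe_product, Set.mem_prod, mem_coe, mem_powersetCard, subset_erase] at h
    obtain ⟨⟨⟨hAX, hxA⟩, -⟩, hBY, -⟩ := h
    have hxAX : insert x A ⊆ X := insert_subset hx hAX
    simp only [union_inter_eq_left_of_disjoint hxAX hBY hXY,
      union_inter_eq_right_of_disjoint hxAX hBY hXY, erase_insert hxA]
  · intro S hS
    simp only [coe_filter, Set.mem_ofPred_eq, mem_bipartiteLayer] at hS
    obtain ⟨⟨hS, -, -⟩, hxS⟩ := hS
    simp only [insert_erase (mem_inter.mpr ⟨hxS, hx⟩), ← inter_union_distrib_left,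
      inter_eq_left.mpr hS]

def hiltonMilnerFamily (X Y : Finset α) (k l : ℕ) (x : α) (T : Finset α) : Finset (Finset α) :=
  insert T {S ∈ bipartiteLayer X Y k l | x ∈ S ∧ ¬Disjoint S T}

theorem mem_hiltonMilnerFamily :
    S ∈ hiltonMilnerFamily X Y k l x T ↔
      S = T ∨ S ∈ bipartiteLayer X Y k l ∧ x ∈ S ∧ ¬Disjoint S T := by
  rw [hiltonMilnerFamily, mem_insert, mem_filter]

theorem hiltonMilnerFamily_subset (hT : T ∈ bipartiteLayer X Y k l) :
    hiltonMilnerFamily X Y k l x T ⊆ bipartiteLayer X Y k l :=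
  insert_subset hT (filter_subset _ _)

theorem intersecting_hiltonMilnerFamily (hT : T.Nonempty) :
    (hiltonMilnerFamily X Y k l x T : Set (Finset α)).Intersecting := by
  intro A hA B hB
  rw [mem_coe, mem_hiltonMilnerFamily] at hA hB
  rcases hA with rfl | ⟨-, hxA, hAT⟩ <;> rcases hB with rfl | ⟨-, hxB, hBT⟩
  · rw [disjoint_self_iff_empty]
    exact hT.ne_empty
  · exact fun h => hBT h.symm
  · exact hAT
  · exact not_disjoint_iff.mpr ⟨x, hxA, hxB⟩

theorem card_hiltonMilnerFamily (hXY : Disjoint X Y) (hx : x ∈ X) (hxT : x ∉ T) :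
    #(hiltonMilnerFamily X Y (k + 1) l x T) + (#(X \ T) - 1).choose k * (#(Y \ T)).choose l =
      (#X - 1).choose k * (#Y).choose l + 1 := by
  have hT : T ∉ {S ∈ bipartiteLayer X Y (k + 1) l | x ∈ S ∧ ¬Disjoint S T} :=
    fun h => hxT (mem_filter.mp h).2.1
  have hsplit := card_filter_add_card_filter_not
    (s := {S ∈ bipartiteLayer X Y (k + 1) l | x ∈ S}) (p := fun S => ¬Disjoint S T)
  simp only [filter_filter, not_not] at hsplit
  rw [hiltonMilnerFamily, card_insert_of_notMem hT, ← card_filter_mem_bipartiteLayer hXY hx,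
    ← card_filter_mem_bipartiteLayer (hXY.mono sdiff_subset sdiff_subset)
      (mem_sdiff.mpr ⟨hx, hxT⟩),
    ← filter_disjoint_bipartiteLayer, filter_filter, ← hsplit]
  simp only [and_comm (a := Disjoint _ T)]
  omega

theorem union_mem_hiltonMilnerFamily (hA : A ⊆ X) (hB : B ⊆ Y) (hXY : Disjoint X Y) (hx : x ∈ A)
    (hABT : ¬Disjoint (A ∪ B) T) : A ∪ B ∈ hiltonMilnerFamily X Y #A #B x T :=
  mem_hiltonMilnerFamily.mpr <|
    .inr ⟨union_mem_bipartiteLayer hA hB hXY, mem_union_left _ hx, hABT⟩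

theorem card_hiltonMilnerFamily_of_card_eq {m : ℕ} (hXY : Disjoint X Y) (hx : x ∈ X)
    (hA : A ⊆ X) (hxA : x ∉ A) (hB : B ⊆ Y) (hX : #X = m) (hY : #Y = m) (hAcard : #A = 2)
    (hBcard : #B = 2) :
    (#(hiltonMilnerFamily X Y 2 2 x (A ∪ B)) : ℤ) = 3 * m ^ 2 - 10 * m + 10 := by
  have hxT : x ∉ A ∪ B := fun h =>
    (mem_union.mp h).elim hxA fun h => disjoint_left.mp hXY hx (hB h)
  have hm : 3 ≤ m := by
    have := card_le_card (insert_subset hx hA)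
    rw [card_insert_of_notMem hxA] at this
    omega
  have hcard := card_hiltonMilnerFamily (k := 1) (l := 2) hXY hx hxT
  have hXT : X \ (A ∪ B) = X \ A := by grind [disjoint_left]
  have hYT : Y \ (A ∪ B) = Y \ B := by grind [disjoint_left]
  rw [hXT, hYT, card_sdiff_of_subset hA, card_sdiff_of_subset hB, hX, hY, hAcard, hBcard,
    Nat.choose_one_right, Nat.choose_one_right] at hcard
  have hQ := congrArg (Nat.cast : ℕ → ℚ) hcard
  push_cast [Nat.cast_choose_two, Nat.cast_sub (by omega : 2 ≤ m),
    Nat.cast_sub (by omega : 1 ≤ m), Nat.cast_sub (by omega : 1 ≤ m - 2)] at hQ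
  have hcardQ : (#(hiltonMilnerFamily X Y 2 2 x (A ∪ B)) : ℚ) = 3 * m ^ 2 - 10 * m + 10 := by
    linear_combination hQ
  exact_mod_cast hcardQ

theorem exists_mem_hiltonMilnerFamily_inter_inter_left_eq_empty {x' : α} (hXY : Disjoint X Y)
    (hx : x ∈ X) (hA : A ⊆ X) (hxA : x ∉ A) (hB : B ⊆ Y) (hx' : x' ∈ X \ insert x A)
    (hBne : B.Nonempty) :
    ∃ S ∈ hiltonMilnerFamily X Y 2 #B x (A ∪ B), (A ∪ B) ∩ S ∩ X = ∅ := by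
  have hxx' : x ≠ x' := fun h => (mem_sdiff.mp hx').2 (h ▸ mem_insert_self x A)
  have hxx'X : {x, x'} ⊆ X := insert_subset hx (singleton_subset_iff.mpr (mem_sdiff.mp hx').1)
  obtain ⟨b, hb⟩ := hBne
  refine ⟨{x, x'} ∪ B, ?_, ?_⟩
  · simpa only [card_pair hxx'] using union_mem_hiltonMilnerFamily hxx'X hB hXY
      (mem_insert_self x {x'})
      (not_disjoint_iff.mpr ⟨b, mem_union_right _ hb, mem_union_right _ hb⟩)
  · rw [inter_inter_distrib_right, union_inter_eq_left_of_disjoint hA hB hXY,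
      union_inter_eq_left_of_disjoint hxx'X hB hXY]
    grind

theorem exists_mem_hiltonMilnerFamily_inter_inter_right_eq_empty {a : α} {B' : Finset α}
    (hXY : Disjoint X Y) (hx : x ∈ X) (hA : A ⊆ X) (hxA : x ∉ A) (hB : B ⊆ Y) (ha : a ∈ A)
    (hB' : B' ⊆ Y) (hBB' : Disjoint B' B) :
    ∃ S ∈ hiltonMilnerFamily X Y 2 #B' x (A ∪ B), (A ∪ B) ∩ S ∩ Y = ∅ := by
  have hxa : x ≠ a := fun h => hxA (h ▸ ha)
  have hxaX : {x, a} ⊆ X := insert_subset hx (singleton_subset_iff.mpr (hA ha))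
  refine ⟨{x, a} ∪ B', ?_, ?_⟩
  · simpa only [card_pair hxa] using union_mem_hiltonMilnerFamily hxaX hB' hXY
      (mem_insert_self x {a}) (not_disjoint_iff.mpr ⟨a, by simp, mem_union_left _ ha⟩)
  · rw [inter_inter_distrib_right, union_inter_eq_right_of_disjoint hA hB hXY,
      union_inter_eq_right_of_disjoint hxaX hB' hXY]
    exact disjoint_iff_inter_eq_empty.mp hBB'.symm

end

/-- For disjoint sets X, Y each of size m ≥ 5, there is a two-sided
intersecting family F ⊆ binom(X,Y){2,2} with |F| ≥ 3m² − 10m + 10. -/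
theorem stmt_0 {α : Type*} [DecidableEq α] (m : ℕ) (hm : 5 ≤ m)
    (X Y : Finset α) (hdisj : Disjoint X Y) (hX : X.card = m) (hY : Y.card = m) :
    ∃ F : Finset (Finset α),
      (∀ S ∈ F, S ⊆ X ∪ Y ∧ (S ∩ X).card = 2 ∧ (S ∩ Y).card = 2) ∧
      (∀ A ∈ F, ∀ B ∈ F, (A ∩ B).Nonempty) ∧
      (∃ F11 ∈ F, ∃ F12 ∈ F, F11 ∩ F12 ∩ X = ∅) ∧
      (∃ F21 ∈ F, ∃ F22 ∈ F, F21 ∩ F22 ∩ Y = ∅) ∧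
      (3 * (m : ℤ) ^ 2 - 10 * m + 10 ≤ (F.card : ℤ)) := by
  obtain ⟨x, hx⟩ : X.Nonempty := card_pos.mp (by omega)
  obtain ⟨A, hA, hAcard⟩ := exists_subset_card_eq (s := X.erase x) (n := 2)
    (by rw [card_erase_of_mem hx]; omega)
  obtain ⟨hAX, hxA⟩ := subset_erase.mp hA
  obtain ⟨B, hB, hBcard⟩ := exists_subset_card_eq (s := Y) (n := 2) (by omega)
  obtain ⟨x', hx'⟩ : (X \ insert x A).Nonempty := card_pos.mp <| by
    rw [card_sdiff_of_subset (insert_subset hx hAX), card_insert_of_notMem hxA]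
    omega
  obtain ⟨B', hB', hB'card⟩ := exists_subset_card_eq (s := Y \ B) (n := 2)
    (by rw [card_sdiff_of_subset hB]; omega)
  obtain ⟨hB'Y, hB'B⟩ := subset_sdiff.mp hB'
  obtain ⟨a, ha⟩ := card_pos.mp (by omega : 0 < #A)
  have hT : A ∪ B ∈ bipartiteLayer X Y 2 2 := by
    simpa only [hAcard, hBcard] using union_mem_bipartiteLayer hAX hB hdisj
  obtain ⟨S₁, hS₁, hS₁X⟩ := exists_mem_hiltonMilnerFamily_inter_inter_left_eq_empty
    hdisj hx hAX hxA hB hx' (card_pos.mp (by omega))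
  obtain ⟨S₂, hS₂, hS₂Y⟩ := exists_mem_hiltonMilnerFamily_inter_inter_right_eq_empty
    hdisj hx hAX hxA hB ha hB'Y hB'B
  rw [hBcard] at hS₁
  rw [hB'card] at hS₂
  refine ⟨hiltonMilnerFamily X Y 2 2 x (A ∪ B),
    fun S hS => mem_bipartiteLayer.mp (hiltonMilnerFamily_subset hT hS),
    fun S hS S' hS' => not_disjoint_iff_nonempty_inter.mp
      (intersecting_hiltonMilnerFamily ⟨a, mem_union_left _ ha⟩ hS hS'),
    ⟨A ∪ B, mem_insert_self _ _, S₁, hS₁, hS₁X⟩, ⟨A ∪ B, mem_insert_self _ _, S₂, hS₂, hS₂Y⟩,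
    (card_hiltonMilnerFamily_of_card_eq hdisj hx hAX hxA hB hX hY hAcard hBcard).ge⟩
end

section
/- For every integer k ≥ 1 there exists an integer m with m ≤ 64k + 1 and a family 𝒜 of distinct subsets of [m] that contains no configuration F₀ and satisfies 3·|𝒜| ≥ 5·C(m,2) + 3·(m + 1 + k) (equivalently |𝒜| ≥ (5/3)·C(m,2) + C(m,1) + C(m,0) + k). -/
/-- A family `𝒜` of subsets of `[m] = {1,…,m}` contains the configuration F₀
(rows (1,1,1,1),(1,1,1,1),(1,0,0,0) up to row/column permutations): there are three
distinct elements of `[m]`, two of which lie in all four of some four distinct members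
of `𝒜`, while the remaining element lies in exactly one of those four members. -/
def ContainsF0 (m : ℕ) (𝒜 : Finset (Finset ℕ)) : Prop :=
  ∃ x ∈ Finset.Icc 1 m, ∃ y ∈ Finset.Icc 1 m, ∃ z ∈ Finset.Icc 1 m,
    x ≠ y ∧ x ≠ z ∧ y ≠ z ∧
    ∃ S₁ ∈ 𝒜, ∃ S₂ ∈ 𝒜, ∃ S₃ ∈ 𝒜, ∃ S₄ ∈ 𝒜,
      S₁ ≠ S₂ ∧ S₁ ≠ S₃ ∧ S₁ ≠ S₄ ∧ S₂ ≠ S₃ ∧ S₂ ≠ S₄ ∧ S₃ ≠ S₄ ∧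
      (x ∈ S₁ ∧ x ∈ S₂ ∧ x ∈ S₃ ∧ x ∈ S₄) ∧
      (y ∈ S₁ ∧ y ∈ S₂ ∧ y ∈ S₃ ∧ y ∈ S₄) ∧
      ((if z ∈ S₁ then 1 else 0) + (if z ∈ S₂ then 1 else 0)
        + (if z ∈ S₃ then 1 else 0) + (if z ∈ S₄ then 1 else 0) = 1)

/-!
Take `m = 4 ^ n` with `4k ≤ m ≤ 16k` and identify `[m]` with the affine space `AG(n, 4)`.
Its lines are `4`-sets, two of which share at most one point, and there are at least
`m(m-1)/12` of them. The family consists of all sets of size at most `2` together with every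
line and its four `3`-subsets, so it has `1 + m + C(m,2) + 5·#lines ≥ 1 + m + (11/6)·C(m,2)`
members, and `C(m,2)/6 ≥ k`.

A copy of F₀ on `x, y, z` needs a member containing all three, hence a line `B` through them,
and three members containing `x, y` but not `z`; yet the only such members are `{x, y}` and
`B \ {z}`.
-/

open Finset

lemma ContainsF0.exists_mem_triple_and_three_le_card_avoiding {m : ℕ} {𝒜 : Finset (Finset ℕ)}
    (h : ContainsF0 m 𝒜) :
    ∃ x y z : ℕ, x ≠ y ∧ x ≠ z ∧ y ≠ z ∧ (∃ S ∈ 𝒜, x ∈ S ∧ y ∈ S ∧ z ∈ S) ∧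
      3 ≤ #{S ∈ 𝒜 | x ∈ S ∧ y ∈ S ∧ z ∉ S} := by
  obtain ⟨x, -, y, -, z, -, hxy, hxz, hyz, S₁, h₁, S₂, h₂, S₃, h₃, S₄, h₄,
    h12, h13, h14, h23, h24, h34, ⟨hx₁, hx₂, hx₃, hx₄⟩, ⟨hy₁, hy₂, hy₃, hy₄⟩, hz⟩ := h
  set T : Finset (Finset ℕ) := {S₁, S₂, S₃, S₄}
  have hT : #T = 4 := by
    rw [card_insert_of_notMem (by simp [h12, h13, h14]),
      card_insert_of_notMem (by simp [h23, h24]), card_pair h34]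
  have hTz : #{S ∈ T | z ∈ S} = 1 := by
    rw [card_filter, sum_insert (by simp [h12, h13, h14]), sum_insert (by simp [h23, h24]),
      sum_pair h34]
    linarith
  have hT𝒜 : T ⊆ 𝒜 := by simp [T, insert_subset_iff, h₁, h₂, h₃, h₄]
  have hTxy : ∀ S ∈ T, x ∈ S ∧ y ∈ S := by simp [T, *]
  refine ⟨x, y, z, hxy, hxz, hyz, ?_, ?_⟩
  · obtain ⟨S, hS⟩ := card_pos.1 (hTz ▸ one_pos)
    obtain ⟨hST, hzS⟩ := mem_filter.1 hS
    exact ⟨S, hT𝒜 hST, (hTxy S hST).1, (hTxy S hST).2, hzS⟩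
  · have := card_filter_add_card_filter_not (s := T) (fun S => z ∈ S)
    calc 3 ≤ #{S ∈ T | z ∉ S} := by omega
      _ ≤ _ := card_le_card fun S hS => by
        obtain ⟨hST, hzS⟩ := mem_filter.1 hS
        exact mem_filter.2 ⟨hT𝒜 hST, (hTxy S hST).1, (hTxy S hST).2, hzS⟩

section WithFacets

variable {α : Type*} [DecidableEq α]

def withFacets (B : Finset α) : Finset (Finset α) := insert B (B.image B.erase)

lemma mem_withFacets {B S : Finset α} : S ∈ withFacets B ↔ S = B ∨ ∃ a ∈ B, S = B.erase a := by
  simp [withFacets, eq_comm]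

lemma subset_of_mem_withFacets {B S : Finset α} (h : S ∈ withFacets B) : S ⊆ B := by
  rcases mem_withFacets.1 h with rfl | ⟨a, -, rfl⟩
  exacts [Subset.rfl, erase_subset _ _]

lemma card_le_card_add_one_of_mem_withFacets {B S : Finset α} (h : S ∈ withFacets B) :
    #B ≤ #S + 1 := by
  rcases mem_withFacets.1 h with rfl | ⟨a, ha, rfl⟩
  · omega
  · rw [card_erase_add_one ha]

lemma card_withFacets (B : Finset α) : #(withFacets B) = #B + 1 := by
  rw [withFacets, card_insert_of_notMem, card_image_of_injOn]
  · intro a ha b hb hab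
    by_contra hne
    have : a ∈ B.erase b := mem_erase.2 ⟨hne, ha⟩
    exact notMem_erase a B (hab ▸ this)
  · intro hB
    obtain ⟨a, ha, h⟩ := mem_image.1 hB
    have := card_erase_lt_of_mem ha
    rw [h] at this
    exact lt_irrefl _ this

end WithFacets

def smallSets (m : ℕ) : Finset (Finset ℕ) :=
  (range 3).biUnion fun i => powersetCard i (Icc 1 m)

lemma mem_smallSets {m : ℕ} {S : Finset ℕ} : S ∈ smallSets m ↔ S ⊆ Icc 1 m ∧ #S ≤ 2 := by
  simp only [smallSets, mem_biUnion, mem_range, mem_powersetCard]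
  constructor
  · rintro ⟨i, hi, hS, rfl⟩
    exact ⟨hS, by omega⟩
  · rintro ⟨hS, hc⟩
    exact ⟨#S, by omega, hS, rfl⟩

lemma card_smallSets (m : ℕ) : #(smallSets m) = 1 + m + m.choose 2 := by
  rw [smallSets, card_biUnion ((pairwise_disjoint_powersetCard _).set_pairwise _)]
  simp [sum_range_succ]

def blockFamily (m : ℕ) (𝓑 : Finset (Finset ℕ)) : Finset (Finset ℕ) :=
  smallSets m ∪ 𝓑.biUnion withFacets

section BlockFamily

variable {m : ℕ} {𝓑 : Finset (Finset ℕ)}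

lemma subset_Icc_of_mem_blockFamily (h𝓑 : ∀ B ∈ 𝓑, B ⊆ Icc 1 m) {S : Finset ℕ}
    (hS : S ∈ blockFamily m 𝓑) : S ⊆ Icc 1 m := by
  rcases mem_union.1 hS with h | h
  · exact (mem_smallSets.1 h).1
  · obtain ⟨B, hB, hSB⟩ := mem_biUnion.1 h
    exact (subset_of_mem_withFacets hSB).trans (h𝓑 B hB)

lemma card_blockFamily {r : ℕ} (hr : 4 ≤ r) (hcard : ∀ B ∈ 𝓑, #B = r)
    (hlin : (𝓑 : Set (Finset ℕ)).Pairwise fun B₁ B₂ => #(B₁ ∩ B₂) ≤ 1) :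
    #(blockFamily m 𝓑) = 1 + m + m.choose 2 + (r + 1) * #𝓑 := by
  have hbig : ∀ B ∈ 𝓑, ∀ S ∈ withFacets B, 3 ≤ #S := fun B hB S hS => by
    have := card_le_card_add_one_of_mem_withFacets hS
    have := hcard B hB
    omega
  have hdisj : (𝓑 : Set (Finset ℕ)).PairwiseDisjoint withFacets := by
    intro B₁ h₁ B₂ h₂ hne
    refine disjoint_left.2 fun S hS₁ hS₂ => ?_
    have : #S ≤ 1 := (card_le_card
      (subset_inter (subset_of_mem_withFacets hS₁) (subset_of_mem_withFacets hS₂))).trans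
      (hlin h₁ h₂ hne)
    have := hbig B₁ h₁ S hS₁
    omega
  rw [blockFamily, card_union_of_disjoint, card_smallSets, card_biUnion hdisj,
    sum_congr rfl fun B hB => by rw [card_withFacets, hcard B hB], sum_const, smul_eq_mul,
    mul_comm]
  refine disjoint_left.2 fun S hS hS' => ?_
  obtain ⟨B, hB, hSB⟩ := mem_biUnion.1 hS'
  have := hbig B hB S hSB
  have := (mem_smallSets.1 hS).2
  omega

lemma eq_of_mem_of_mem_of_pairwise_card_inter_le_one
    (hlin : (𝓑 : Set (Finset ℕ)).Pairwise fun B₁ B₂ => #(B₁ ∩ B₂) ≤ 1)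
    {B₁ B₂ : Finset ℕ} (h₁ : B₁ ∈ 𝓑) (h₂ : B₂ ∈ 𝓑) {x y : ℕ} (hxy : x ≠ y)
    (hx₁ : x ∈ B₁) (hy₁ : y ∈ B₁) (hx₂ : x ∈ B₂) (hy₂ : y ∈ B₂) : B₁ = B₂ := by
  by_contra hne
  have := (card_le_card (s := {x, y}) (by simp [insert_subset_iff, *])).trans (hlin h₁ h₂ hne)
  rw [card_pair hxy] at this
  omega

lemma filter_blockFamily_avoiding_subset
    (hlin : (𝓑 : Set (Finset ℕ)).Pairwise fun B₁ B₂ => #(B₁ ∩ B₂) ≤ 1)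
    {B : Finset ℕ} (hB : B ∈ 𝓑) {x y z : ℕ} (hxy : x ≠ y) (hx : x ∈ B) (hy : y ∈ B)
    (hz : z ∈ B) :
    {S ∈ blockFamily m 𝓑 | x ∈ S ∧ y ∈ S ∧ z ∉ S} ⊆ {{x, y}, B.erase z} := by
  intro S hS
  obtain ⟨hS, hxS, hyS, hzS⟩ := mem_filter.1 hS
  rcases mem_union.1 hS with hsmall | hS
  · have hpair : {x, y} ⊆ S := by simp [insert_subset_iff, hxS, hyS]
    have := (mem_smallSets.1 hsmall).2
    rw [eq_of_subset_of_card_le hpair (by rw [card_pair hxy]; omega)]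
    exact mem_insert_self _ _
  · obtain ⟨B', hB', hSB'⟩ := mem_biUnion.1 hS
    have hsub := subset_of_mem_withFacets hSB'
    obtain rfl := eq_of_mem_of_mem_of_pairwise_card_inter_le_one hlin hB' hB hxy
      (hsub hxS) (hsub hyS) hx hy
    rcases mem_withFacets.1 hSB' with rfl | ⟨a, -, rfl⟩
    · exact absurd hz hzS
    · obtain rfl : z = a := by
        by_contra hza
        exact hzS (mem_erase.2 ⟨hza, hz⟩)
      simp

theorem not_containsF0_blockFamily
    (hlin : (𝓑 : Set (Finset ℕ)).Pairwise fun B₁ B₂ => #(B₁ ∩ B₂) ≤ 1) :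
    ¬ ContainsF0 m (blockFamily m 𝓑) := by
  intro h
  obtain ⟨x, y, z, hxy, hxz, hyz, ⟨S, hS, hxS, hyS, hzS⟩, h3⟩ :=
    h.exists_mem_triple_and_three_le_card_avoiding
  obtain ⟨B, hB, hSB⟩ : ∃ B ∈ 𝓑, S ∈ withFacets B := by
    refine mem_biUnion.1 ((mem_union.1 hS).resolve_left fun hsmall => ?_)
    have := card_le_card (s := {x, y, z}) (t := S) (by simp [insert_subset_iff, *])
    rw [card_eq_three.2 ⟨x, y, z, hxy, hxz, hyz, rfl⟩] at this
    have := (mem_smallSets.1 hsmall).2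
    omega
  have hsub := subset_of_mem_withFacets hSB
  have h2 : #{S ∈ blockFamily m 𝓑 | x ∈ S ∧ y ∈ S ∧ z ∉ S} ≤ 2 :=
    (card_le_card (filter_blockFamily_avoiding_subset hlin hB hxy (hsub hxS) (hsub hyS)
      (hsub hzS))).trans card_le_two
  omega

end BlockFamily

section AffineLines

variable (F : Type*) {V : Type*} [Field F] [Fintype F] [AddCommGroup V] [Module F V]
  [DecidableEq V]

def affineLine (p q : V) : Finset V := univ.image fun t : F => p + t • (q - p)

variable {F}

lemma left_mem_affineLine (p q : V) : p ∈ affineLine F p q :=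
  mem_image.2 ⟨0, mem_univ _, by simp⟩

lemma right_mem_affineLine (p q : V) : q ∈ affineLine F p q :=
  mem_image.2 ⟨1, mem_univ _, by simp⟩

lemma card_affineLine {p q : V} (h : p ≠ q) : #(affineLine F p q) = Fintype.card F := by
  rw [affineLine, card_image_of_injective _ fun s t hst => ?_, card_univ]
  exact smul_left_injective F (sub_ne_zero.2 h.symm) (add_left_cancel hst)

lemma affineLine_eq_of_mem {p q p' q' : V} (hp' : p' ∈ affineLine F p q)
    (hq' : q' ∈ affineLine F p q) (hne : p' ≠ q') : affineLine F p' q' = affineLine F p q := by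
  classical
  obtain ⟨s, -, rfl⟩ := mem_image.1 hp'
  obtain ⟨t, -, rfl⟩ := mem_image.1 hq'
  have hst : t - s ≠ 0 := sub_ne_zero.2 fun h => hne (by rw [h])
  have hreparam : (fun u : F => p + s • (q - p) + u • (p + t • (q - p) - (p + s • (q - p)))) =
      (fun u : F => p + u • (q - p)) ∘ fun u => s + u * (t - s) := by
    funext u
    simp only [Function.comp]
    module
  rw [affineLine, hreparam, ← image_image, image_univ_of_surjective, affineLine]
  exact fun u => ⟨(u - s) / (t - s), by field_simp; ring⟩

variable (F V) [Fintype V]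

def affineLines : Finset (Finset V) :=
  univ.offDiag.image fun pq : V × V => affineLine F pq.1 pq.2

variable {F V}

lemma card_of_mem_affineLines {B : Finset V} (hB : B ∈ affineLines F V) :
    #B = Fintype.card F := by
  obtain ⟨⟨p, q⟩, hpq, rfl⟩ := mem_image.1 hB
  exact card_affineLine (mem_offDiag.1 hpq).2.2

lemma eq_affineLine_of_mem_affineLines {B : Finset V} (hB : B ∈ affineLines F V) {p q : V}
    (hp : p ∈ B) (hq : q ∈ B) (hpq : p ≠ q) : B = affineLine F p q := by
  obtain ⟨⟨a, b⟩, -, rfl⟩ := mem_image.1 hB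
  exact (affineLine_eq_of_mem hp hq hpq).symm

variable (F V)

lemma pairwise_card_inter_affineLines_le_one :
    (affineLines F V : Set (Finset V)).Pairwise fun B₁ B₂ => #(B₁ ∩ B₂) ≤ 1 := by
  intro B₁ h₁ B₂ h₂ hne
  by_contra! h
  obtain ⟨p, hp, q, hq, hpq⟩ := one_lt_card.1 h
  rw [mem_inter] at hp hq
  exact hne ((eq_affineLine_of_mem_affineLines h₁ hp.1 hq.1 hpq).trans
    (eq_affineLine_of_mem_affineLines h₂ hp.2 hq.2 hpq).symm)

lemma card_mul_pred_le_card_affineLines :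
    Fintype.card V * (Fintype.card V - 1) ≤
      Fintype.card F * (Fintype.card F - 1) * #(affineLines F V) := by
  have hfiber : ∀ B ∈ affineLines F V,
      #{pq ∈ (univ : Finset V).offDiag | affineLine F pq.1 pq.2 = B} ≤
        Fintype.card F * (Fintype.card F - 1) := fun B hB => by
    calc _ ≤ #B.offDiag := card_le_card fun pq hpq => by
          obtain ⟨hmem, rfl⟩ := mem_filter.1 hpq
          exact mem_offDiag.2
            ⟨left_mem_affineLine _ _, right_mem_affineLine _ _, (mem_offDiag.1 hmem).2.2⟩
      _ = _ := by rw [offDiag_card, card_of_mem_affineLines hB, Nat.mul_sub, mul_one]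
  calc Fintype.card V * (Fintype.card V - 1) = #(univ : Finset V).offDiag := by
        rw [offDiag_card, card_univ, Nat.mul_sub, mul_one]
    _ ≤ _ := card_le_mul_card_image _ _ hfiber

end AffineLines

theorem exists_linear_blocks_of_module (F V : Type*) [Field F] [Fintype F] [AddCommGroup V]
    [Module F V] [Fintype V] :
    ∃ 𝓑 : Finset (Finset ℕ), (∀ B ∈ 𝓑, B ⊆ Icc 1 (Fintype.card V)) ∧
      (∀ B ∈ 𝓑, #B = Fintype.card F) ∧
      (𝓑 : Set (Finset ℕ)).Pairwise (fun B₁ B₂ => #(B₁ ∩ B₂) ≤ 1) ∧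
      Fintype.card V * (Fintype.card V - 1) ≤
        Fintype.card F * (Fintype.card F - 1) * #𝓑 := by
  classical
  let e : V ↪ ℕ := (Fintype.equivFin V).toEmbedding.trans (Fin.valEmbedding.trans
    ⟨(· + 1), add_left_injective 1⟩)
  have he : ∀ v, e v ∈ Icc 1 (Fintype.card V) := fun v => by simp [e]
  refine ⟨(affineLines F V).image (·.map e), ?_, ?_, ?_, ?_⟩
  · simp only [mem_image]
    rintro _ ⟨B, -, rfl⟩ _ hv
    obtain ⟨v, -, rfl⟩ := mem_map.1 hv
    exact he v
  · simp only [mem_image]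
    rintro _ ⟨B, hB, rfl⟩
    rw [card_map, card_of_mem_affineLines hB]
  · simp only [coe_image]
    rintro _ ⟨B₁, h₁, rfl⟩ _ ⟨B₂, h₂, rfl⟩ hne
    rw [← map_inter, card_map]
    exact pairwise_card_inter_affineLines_le_one F V h₁ h₂ fun h => hne (h ▸ rfl)
  · rw [card_image_of_injective _ (map_injective e)]
    exact card_mul_pred_le_card_affineLines F V

lemma exists_four_pow_mem_Icc {k : ℕ} (hk : 1 ≤ k) : ∃ n, 4 * k ≤ 4 ^ n ∧ 4 ^ n ≤ 16 * k := by
  refine ⟨Nat.log 4 k + 2, ?_, ?_⟩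
  · have := Nat.lt_pow_succ_log_self (b := 4) (by norm_num) k
    rw [pow_succ _ (Nat.log 4 k + 1)]
    omega
  · have := Nat.pow_log_le_self 4 (x := k) (by omega)
    rw [pow_add]
    omega

/-- for every k ≥ 1 there is m ≤ 64k+1 and a family of distinct subsets
of [m] with no configuration F₀ and size at least (5/3)·C(m,2) + C(m,1) + C(m,0) + k. -/
theorem stmt_2 (k : ℕ) (hk : 1 ≤ k) :
    ∃ m : ℕ, m ≤ 64 * k + 1 ∧
      ∃ 𝒜 : Finset (Finset ℕ),
        (∀ S ∈ 𝒜, S ⊆ Finset.Icc 1 m) ∧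
        ¬ ContainsF0 m 𝒜 ∧
        5 * Nat.choose m 2 + 3 * (m + 1 + k) ≤ 3 * 𝒜.card := by
  obtain ⟨n, hlow, hup⟩ := exists_four_pow_mem_Icc hk
  let := Fintype.ofFinite (GaloisField 2 2)
  have hF : Fintype.card (GaloisField 2 2) = 4 := by
    rw [Fintype.card_eq_nat_card, GaloisField.card 2 2 two_ne_zero]
    norm_num
  obtain ⟨𝓑, hsub, hcard, hlin, hcount⟩ :=
    exists_linear_blocks_of_module (GaloisField 2 2) (Fin n → GaloisField 2 2)
  simp only [Fintype.card_fun, Fintype.card_fin, hF] at hsub hcard hcount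
  refine ⟨4 ^ n, by omega, blockFamily (4 ^ n) 𝓑, fun S => subset_Icc_of_mem_blockFamily hsub,
    not_containsF0_blockFamily hlin, ?_⟩
  rw [card_blockFamily le_rfl hcard hlin]
  have hchoose : 2 * (4 ^ n).choose 2 = 4 ^ n * (4 ^ n - 1) := by
    rw [Nat.choose_two_right, Nat.mul_div_cancel' (Nat.even_mul_pred_self _).two_dvd]
  have hpairs : 4 * k * 3 ≤ 4 ^ n * (4 ^ n - 1) := Nat.mul_le_mul hlow (by omega)
  linarith
end

section
/- For all integers k, n with 1 ≤ k ≤ n, there exists a subgraph G of the complete 4-partite graph K_{n,n,n,n} (with four parts each of size n) such that G has at least 4n² + (k−1)n edges and G contains no k pairwise vertex-disjoint triangles. -/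
/-!
With the parts `V₁, …, V₄` indexed by `Fin 4`, join every vertex of `V₁ ∪ V₂` to every vertex
of `V₃ ∪ V₄` (`4n²` edges) and add all edges between `V₂` and a set `A` of `k - 1` vertices of
`V₁` (`(k - 1)n` edges). Off `A` this graph is bipartite, so every triangle meets `A`, and `k`
disjoint triangles would need `k` distinct vertices of `A`.
-/

/-- The complete 4-partite graph `K_{n,n,n,n}`: vertices are pairs (part, index),
two vertices adjacent iff they lie in different parts. -/
def K4n (n : ℕ) : SimpleGraph (Fin 4 × Fin n) where
  Adj v w := v.1 ≠ w.1
  symm := ⟨fun _ _ h => Ne.symm h⟩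
  loopless := ⟨fun _ h => h rfl⟩

open Function

theorem SimpleGraph.IsNClique.exists_mem_of_card_lt {V β : Type*} [Fintype β]
    {G : SimpleGraph V} {S : Set V} {col : V → β}
    (hcol : ∀ v w, G.Adj v w → v ∉ S → w ∉ S → col v ≠ col w)
    {m : ℕ} {t : Finset V} (ht : G.IsNClique m t) (hm : Fintype.card β < m) :
    ∃ v ∈ t, v ∈ S := by
  by_contra! htS
  obtain ⟨x, hx, y, hy, hxy, hcxy⟩ := Finset.exists_ne_map_eq_of_card_lt_of_maps_to
    (t := Finset.univ) (f := col) (by rwa [Finset.card_univ, ht.card_eq])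
    (fun _ _ => Finset.mem_coe.2 (Finset.mem_univ _))
  exact hcol x y (ht.isClique hx hy hxy) (htS x hx) (htS y hy) hcxy

theorem Fintype.card_le_card_of_pairwise_disjoint {ι α : Type*} [Fintype ι]
    {T : ι → Finset α} (hT : Pairwise (Disjoint on T)) {S : Finset α}
    (hS : ∀ i, ∃ v ∈ T i, v ∈ S) : Fintype.card ι ≤ S.card := by
  choose f hfT hfS using hS
  refine Finset.card_le_card_of_injOn f (fun i _ => hfS i) fun i _ j _ hij => ?_
  by_contra hne
  exact Finset.disjoint_left.1 (hT hne) (hfT i) (hij ▸ hfT j)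

def extremalGraph (n : ℕ) (A : Finset (Fin n)) : SimpleGraph (Fin 4 × Fin n) where
  Adj v w := decide (v.1 < 2) ≠ decide (w.1 < 2) ∨
    (v.1 = 0 ∧ v.2 ∈ A ∧ w.1 = 1) ∨ (w.1 = 0 ∧ w.2 ∈ A ∧ v.1 = 1)
  symm := ⟨by intro v w h; grind⟩
  loopless := ⟨by intro v h; grind⟩

namespace extremalGraph

variable {n : ℕ} {A : Finset (Fin n)}

theorem le_K4n : extremalGraph n A ≤ K4n n := by
  intro v w h (hvw : v.1 = w.1)
  rcases h with h | h | h <;> grind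

theorem lt_two_ne_of_adj {v w : Fin 4 × Fin n} (h : (extremalGraph n A).Adj v w)
    (hv : v ∉ ({0} : Finset (Fin 4)) ×ˢ A)
    (hw : w ∉ ({0} : Finset (Fin 4)) ×ˢ A) :
    decide (v.1 < 2) ≠ decide (w.1 < 2) := by
  simp only [Finset.mem_product, Finset.mem_singleton] at hv hw
  rcases h with h | h | h
  · exact h
  · exact absurd ⟨h.1, h.2.1⟩ hv
  · exact absurd ⟨h.1, h.2.1⟩ hw

theorem le_ncard_edgeSet : 4 * n ^ 2 + A.card * n ≤ (extremalGraph n A).edgeSet.ncard := by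
  let f : (Fin 2 × Fin n) × (Fin 2 × Fin n) ⊕ A × Fin n → Sym2 (Fin 4 × Fin n) :=
    Sum.elim (fun p => s((Fin.castAdd 2 p.1.1, p.1.2), (Fin.natAdd 2 p.2.1, p.2.2)))
      (fun p => s((0, p.1), (1, p.2)))
  have hf : Injective f := by
    refine Injective.sumElim ?_ ?_ ?_
    · rintro ⟨⟨a, i⟩, ⟨b, j⟩⟩ ⟨⟨a', i'⟩, ⟨b', j'⟩⟩ h
      grind [Sym2.eq_iff, Fin.ext_iff, Fin.val_natAdd, Fin.val_castAdd]
    · rintro ⟨i, j⟩ ⟨i', j'⟩ h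
      grind [Sym2.eq_iff]
    · rintro ⟨⟨a, i⟩, ⟨b, j⟩⟩ ⟨i', j'⟩ h
      grind [Sym2.eq_iff, Fin.ext_iff, Fin.val_natAdd]
  have hfG : Set.range f ⊆ (extremalGraph n A).edgeSet := by
    rintro _ ⟨⟨⟨a, -⟩, ⟨b, -⟩⟩ | ⟨i, -⟩, rfl⟩
    · exact Or.inl (by simp [Fin.lt_def, a.2])
    · exact Or.inr (Or.inl ⟨rfl, i.2, rfl⟩)
  have hcard := Set.ncard_le_ncard hfG
  simp only [Set.ncard_range_of_injective hf, Nat.card_eq_fintype_card, Fintype.card_sum,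
    Fintype.card_prod, Fintype.card_fin, Fintype.card_coe] at hcard
  linarith

end extremalGraph

/-- for 1 ≤ k ≤ n there is a subgraph of K_{n,n,n,n} with at least
4n² + (k−1)n edges and no k pairwise vertex-disjoint triangles. -/
theorem stmt_4 (k n : ℕ) (hk : 1 ≤ k) (hkn : k ≤ n) :
    ∃ G : SimpleGraph (Fin 4 × Fin n), G ≤ K4n n ∧
      4 * n ^ 2 + (k - 1) * n ≤ G.edgeSet.ncard ∧
      ¬ ∃ T : Fin k → Finset (Fin 4 × Fin n),
          (∀ i, G.IsNClique 3 (T i)) ∧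
          (∀ i j, i ≠ j → Disjoint (T i) (T j)) := by
  obtain ⟨A, -, hA⟩ :=
    (Finset.univ : Finset (Fin n)).exists_subset_card_eq (n := k - 1) (by simp; omega)
  refine ⟨extremalGraph n A, extremalGraph.le_K4n, hA ▸ extremalGraph.le_ncard_edgeSet, ?_⟩
  rintro ⟨T, hT, hTdisj⟩
  have hTmeet : ∀ i, ∃ v ∈ T i, v ∈ ({0} : Finset (Fin 4)) ×ˢ A := fun i =>
    (hT i).exists_mem_of_card_lt (col := fun v => decide (v.1 < 2))
      (fun _ _ => extremalGraph.lt_two_ne_of_adj) (by simp)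
  have hcard := Fintype.card_le_card_of_pairwise_disjoint hTdisj hTmeet
  rw [Finset.card_product, Finset.card_singleton, hA, Fintype.card_fin] at hcard
  omega
end

section
/- For every integer n ≥ 2, the family F = {A ⊆ [n] : |A| = 2} ∪ {A ⊆ [n] : |A| = 3 and 1 ∈ A} of subsets of [n] = {1,...,n} contains no 3-chain, has diameter at most 5, and has size |F| = C(n,2) + C(n−1,2) = (n−1)². -/
/-- The family F = {A ⊆ [n] : |A| = 2} ∪ {A ⊆ [n] : |A| = 3, 1 ∈ A}. -/
def F6 (n : ℕ) : Finset (Finset ℕ) :=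
  ((Finset.Icc 1 n).powerset.filter (fun A => A.card = 2)) ∪
  ((Finset.Icc 1 n).powerset.filter (fun A => A.card = 3 ∧ 1 ∈ A))

open Finset

namespace Finset

variable {α : Type*}

theorem card_add_two_le_of_ssubset_of_ssubset {A B C : Finset α} (hAB : A ⊂ B) (hBC : B ⊂ C) :
    #A + 2 ≤ #C := by
  have := card_lt_card hAB
  have := card_lt_card hBC
  omega

variable [DecidableEq α]

theorem card_sdiff_union_sdiff_add_two_mul_card_inter (A B : Finset α) :
    #(A \ B ∪ B \ A) + 2 * #(A ∩ B) = #A + #B := by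
  rw [card_union_of_disjoint disjoint_sdiff_sdiff]
  have hA := card_sdiff_add_card_inter A B
  have hB := card_sdiff_add_card_inter B A
  rw [inter_comm] at hB
  omega

theorem card_filter_powerset_card_succ_mem {s : Finset α} {a : α} (ha : a ∈ s) (k : ℕ) :
    #{A ∈ s.powerset | #A = k + 1 ∧ a ∈ A} = (#s - 1).choose k := by
  have himage : {A ∈ s.powerset | #A = k + 1 ∧ a ∈ A} =
      ((s.erase a).powersetCard k).image (insert a) := by
    ext A
    simp only [mem_filter, mem_powerset, mem_image, mem_powersetCard]
    constructor
    · rintro ⟨hAs, hcard, haA⟩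
      refine ⟨A.erase a, ⟨erase_subset_erase a hAs, ?_⟩, insert_erase haA⟩
      rw [card_erase_of_mem haA, hcard, Nat.add_sub_cancel]
    · rintro ⟨B, ⟨hBs, rfl⟩, rfl⟩
      have haB : a ∉ B := fun h => (mem_erase.1 (hBs h)).1 rfl
      exact ⟨insert_subset ha (hBs.trans (erase_subset a s)), card_insert_of_notMem haB,
        mem_insert_self a B⟩
  rw [himage, card_image_of_injOn, card_powersetCard, card_erase_of_mem ha]
  intro B hB C hC hBC
  have haB : a ∉ B := fun h => (mem_erase.1 ((mem_powersetCard.1 hB).1 h)).1 rfl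
  have haC : a ∉ C := fun h => (mem_erase.1 ((mem_powersetCard.1 hC).1 h)).1 rfl
  simpa [erase_insert haB, erase_insert haC] using congrArg (erase · a) hBC

end Finset

theorem Nat.choose_two_add_choose_two_sub_one (n : ℕ) :
    n.choose 2 + (n - 1).choose 2 = (n - 1) ^ 2 := by
  rcases n with _ | n
  · rfl
  · simp only [Nat.add_sub_cancel]
    have h : (((n + 1).choose 2 + n.choose 2 : ℕ) : ℚ) = ((n ^ 2 : ℕ) : ℚ) := by
      push_cast [Nat.cast_choose_two]
      ring
    exact_mod_cast h

theorem mem_F6 {n : ℕ} {A : Finset ℕ} :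
    A ∈ F6 n ↔ A ⊆ Icc 1 n ∧ (#A = 2 ∨ #A = 3 ∧ 1 ∈ A) := by
  simp only [F6, mem_union, mem_filter, mem_powerset, and_or_left]

theorem card_F6 (n : ℕ) : #(F6 n) = n.choose 2 + (n - 1).choose 2 := by
  rcases n with _ | n
  · rfl
  have hdisj : Disjoint {A ∈ (Icc 1 (n + 1)).powerset | #A = 2}
      {A ∈ (Icc 1 (n + 1)).powerset | #A = 3 ∧ 1 ∈ A} :=
    disjoint_filter.2 fun _ _ h2 h3 => by omega
  rw [F6, card_union_of_disjoint hdisj, ← powersetCard_eq_filter, card_powersetCard,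
    card_filter_powerset_card_succ_mem (by simp) 2, Nat.card_Icc, Nat.add_sub_cancel]

theorem stmt_6_general (n : ℕ) :
    (¬ ∃ A ∈ F6 n, ∃ B ∈ F6 n, ∃ C ∈ F6 n, A ⊂ B ∧ B ⊂ C) ∧
    (∀ A ∈ F6 n, ∀ B ∈ F6 n, ((A \ B) ∪ (B \ A)).card ≤ 5) ∧
    (F6 n).card = Nat.choose n 2 + Nat.choose (n - 1) 2 ∧
    (F6 n).card = (n - 1) ^ 2 := by
  refine ⟨?_, ?_, card_F6 n, (card_F6 n).trans (Nat.choose_two_add_choose_two_sub_one n)⟩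
  · rintro ⟨A, hA, B, -, C, hC, hAB, hBC⟩
    have := card_add_two_le_of_ssubset_of_ssubset hAB hBC
    have := (mem_F6.1 hA).2
    have := (mem_F6.1 hC).2
    omega
  · intro A hA B hB
    have hsymm := card_sdiff_union_sdiff_add_two_mul_card_inter A B
    rcases (mem_F6.1 hA).2, (mem_F6.1 hB).2 with ⟨hA | ⟨hA, h1A⟩, hB | ⟨hB, h1B⟩⟩
    any_goals omega
    -- two 3-sets both containing 1 meet, so their symmetric difference has at most 4 elements
    have : 0 < #(A ∩ B) := card_pos.2 ⟨1, mem_inter.2 ⟨h1A, h1B⟩⟩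
    omega

/-- for n ≥ 2, F6 n has no 3-chain, diameter at most 5, and size
C(n,2) + C(n−1,2) = (n−1)². -/
theorem stmt_6 (n : ℕ) (hn : 2 ≤ n) :
    (¬ ∃ A ∈ F6 n, ∃ B ∈ F6 n, ∃ C ∈ F6 n, A ⊂ B ∧ B ⊂ C) ∧
    (∀ A ∈ F6 n, ∀ B ∈ F6 n, ((A \ B) ∪ (B \ A)).card ≤ 5) ∧
    (F6 n).card = Nat.choose n 2 + Nat.choose (n - 1) 2 ∧
    (F6 n).card = (n - 1) ^ 2 :=
  stmt_6_general n
end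

section
/- The family F = {A ⊆ [9] : |A| = 3} ∪ {A ⊆ [9] : |A| = 4 and 1 ∈ A} ∪ {{2,3,4,5,6,7,8,9}} of subsets of [9] = {1,...,9} contains no 3-chain, has diameter at most 7, and has size |F| = C(9,3) + C(8,3) + 1 = 141. -/
/-!
Members of `F8` have sizes 3, 4 and 8, so a 3-chain would have to pass from a 4-set containing 1
to `{2, …, 9}`, which is impossible. Since `#(A ∆ B) = #A + #B - 2 #(A ∩ B)`, the diameter bound
comes from the small sizes, from the common element 1 of two 4-sets, and from `A ⊆ insert 1 {2, …, 9}`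
when comparing with the large set. The 4-sets through 1 correspond to the 3-subsets of `{2, …, 9}`.
-/

def F8 : Finset (Finset ℕ) :=
  ((Finset.Icc 1 9).powerset.filter (fun A => A.card = 3)) ∪
  ((Finset.Icc 1 9).powerset.filter (fun A => A.card = 4 ∧ 1 ∈ A)) ∪
  {({2, 3, 4, 5, 6, 7, 8, 9} : Finset ℕ)}

open Finset
open scoped symmDiff

namespace Finset

variable {α : Type*} [DecidableEq α] {s t : Finset α} {a : α}

theorem card_symmDiff_add_two_mul_card_inter : #(s ∆ t) + 2 * #(s ∩ t) = #s + #t := by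
  rw [symmDiff_def, sup_eq_union, card_union_of_disjoint disjoint_sdiff_sdiff,
    card_sdiff, card_sdiff, inter_comm t s]
  have := card_le_card (inter_subset_left : s ∩ t ⊆ s)
  have := card_le_card (inter_subset_right : s ∩ t ⊆ t)
  omega

theorem card_symmDiff_add_two_le_of_mem (hs : a ∈ s) (ht : a ∈ t) : #(s ∆ t) + 2 ≤ #s + #t := by
  have : 1 ≤ #(s ∩ t) := card_pos.2 ⟨a, mem_inter.2 ⟨hs, ht⟩⟩
  have := card_symmDiff_add_two_mul_card_inter (s := s) (t := t)
  omega

theorem card_symmDiff_add_card_le_of_subset_insert (h : s ⊆ insert a t) :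
    #(s ∆ t) + #s ≤ #t + 2 := by
  have : #s ≤ #(s ∩ t) + 1 := by
    refine (card_le_card fun x hx => ?_).trans (card_insert_le a (s ∩ t))
    rcases mem_insert.1 (h hx) with rfl | hxt
    · exact mem_insert_self _ _
    · exact mem_insert_of_mem (mem_inter.2 ⟨hx, hxt⟩)
  have := card_symmDiff_add_two_mul_card_inter (s := s) (t := t)
  omega

theorem card_filter_powerset_card_eq_succ_and_mem (ha : a ∈ s) (k : ℕ) :
    #{A ∈ s.powerset | #A = k + 1 ∧ a ∈ A} = (#s - 1).choose k := by
  rw [← card_erase_of_mem ha, ← card_powersetCard]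
  refine card_nbij' (·.erase a) (insert a) (fun A hA => ?_) (fun B hB => ?_)
    (fun A hA => insert_erase (mem_filter.1 hA).2.2) (fun B hB => erase_insert ?_)
  · obtain ⟨hAs, hAk, haA⟩ := by simpa using hA
    simpa [card_erase_of_mem haA, hAk] using erase_subset_erase a hAs
  · obtain ⟨hBs, hBk⟩ := by simpa using hB
    have haB : a ∉ B := fun h => by simpa using hBs h
    simpa [card_insert_of_notMem haB, hBk] using insert_subset ha (subset_erase.1 hBs).1
  · exact fun h => by simpa using (mem_powersetCard.1 hB).1 h

end Finset

theorem card_two_to_nine : #({2, 3, 4, 5, 6, 7, 8, 9} : Finset ℕ) = 8 := rfl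

theorem mem_F8 {A : Finset ℕ} : A ∈ F8 ↔ (A ⊆ Icc 1 9 ∧ #A = 3) ∨
    (A ⊆ Icc 1 9 ∧ #A = 4 ∧ 1 ∈ A) ∨ A = {2, 3, 4, 5, 6, 7, 8, 9} := by
  simp only [F8, mem_union, mem_filter, mem_powerset, mem_singleton, or_assoc]

theorem card_F8 : #F8 = Nat.choose 9 3 + Nat.choose 8 3 + 1 := by
  have hsmall : Disjoint ((Icc 1 9).powerset.filter (fun A => #A = 3))
      ((Icc 1 9).powerset.filter (fun A => #A = 4 ∧ 1 ∈ A)) :=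
    disjoint_filter.2 fun A _ h3 h4 => by omega
  have htop : {2, 3, 4, 5, 6, 7, 8, 9} ∉ (Icc 1 9).powerset.filter (fun A => #A = 3) ∪
      (Icc 1 9).powerset.filter (fun A => #A = 4 ∧ 1 ∈ A) := by
    simp only [mem_union, mem_filter, card_two_to_nine]
    omega
  rw [F8, card_union_of_disjoint (disjoint_singleton_right.2 htop),
    card_union_of_disjoint hsmall, ← powersetCard_eq_filter, card_powersetCard,
    card_filter_powerset_card_eq_succ_and_mem (by decide) 3, Nat.card_Icc, card_singleton]

theorem no_three_chain_F8 : ¬ ∃ A ∈ F8, ∃ B ∈ F8, ∃ C ∈ F8, A ⊂ B ∧ B ⊂ C := by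
  rintro ⟨A, hA, B, hB, C, hC, hAB, hBC⟩
  have := card_lt_card hAB
  have := card_lt_card hBC
  have := card_two_to_nine
  rcases mem_F8.1 hA with ⟨-, hA3⟩ | ⟨-, hA4, -⟩ | rfl <;>
  rcases mem_F8.1 hB with ⟨-, hB3⟩ | ⟨-, hB4, h1B⟩ | rfl <;>
  rcases mem_F8.1 hC with ⟨-, hC3⟩ | ⟨-, hC4, -⟩ | rfl <;>
  try omega
  exact absurd (hBC.subset h1B) (by decide)

theorem card_symmDiff_two_to_nine_le {A : Finset ℕ} (hA : A ⊆ Icc 1 9) (hA3 : 3 ≤ #A) :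
    #(A ∆ {2, 3, 4, 5, 6, 7, 8, 9}) ≤ 7 := by
  have := card_symmDiff_add_card_le_of_subset_insert (a := 1) (t := {2, 3, 4, 5, 6, 7, 8, 9})
    (hA.trans (by decide))
  have := card_two_to_nine
  omega

theorem card_symmDiff_le_of_mem_F8 {A B : Finset ℕ} (hA : A ∈ F8) (hB : B ∈ F8) :
    #(A ∆ B) ≤ 7 := by
  have := card_symmDiff_add_two_mul_card_inter (s := A) (t := B)
  rcases mem_F8.1 hA with ⟨hA9, hA3⟩ | ⟨hA9, hA4, h1A⟩ | rfl <;>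
  rcases mem_F8.1 hB with ⟨hB9, hB3⟩ | ⟨hB9, hB4, h1B⟩ | rfl
  · omega
  · omega
  · exact card_symmDiff_two_to_nine_le hA9 hA3.ge
  · omega
  · have := card_symmDiff_add_two_le_of_mem h1A h1B
    omega
  · exact card_symmDiff_two_to_nine_le hA9 (by omega)
  · exact symmDiff_comm B _ ▸ card_symmDiff_two_to_nine_le hB9 hB3.ge
  · exact symmDiff_comm B _ ▸ card_symmDiff_two_to_nine_le hB9 (by omega)
  · simp

/-- F8 has no 3-chain, diameter at most 7, and size C(9,3)+C(8,3)+1 = 141. -/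
theorem stmt_8 :
    (¬ ∃ A ∈ F8, ∃ B ∈ F8, ∃ C ∈ F8, A ⊂ B ∧ B ⊂ C) ∧
    (∀ A ∈ F8, ∀ B ∈ F8, ((A \ B) ∪ (B \ A)).card ≤ 7) ∧
    F8.card = Nat.choose 9 3 + Nat.choose 8 3 + 1 ∧
    F8.card = 141 := by
  refine ⟨no_three_chain_F8, fun A hA B hB => card_symmDiff_le_of_mem_F8 hA hB, card_F8, ?_⟩
  rw [card_F8]
  rfl
end

section
/- There exists an intersecting family F of subsets of [9] = {1,...,9} with diversity ρ(F) ≥ 97. In particular, since 97 > Σ_{i=5}^{8} C(8,i) = 93, this disproves Huang's conjecture that every intersecting family F ⊆ 2^[2k+1] satisfies ρ(F) ≤ Σ_{i=k+1}^{2k} C(2k,i), for k = 4. -/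
/-- The maximum degree of a family of subsets of [n]. -/
def maxDegree (F : Finset (Finset ℕ)) (n : ℕ) : ℕ :=
  (Finset.Icc 1 n).sup (fun i => (F.filter (fun A => i ∈ A)).card)

/-- The diversity ρ(F) = |F| − Δ(F) of a family of subsets of [n]. -/
def diversity (F : Finset (Finset ℕ)) (n : ℕ) : ℕ := F.card - maxDegree F n

/-!
In `2^[2k+1]` the sets of size at least `k + 1` form an intersecting family in which the sets
avoiding a point `i` number `∑_{j=k+1}^{2k} C(2k, j)`, Huang's bound. Given an intersecting
family `T` of `k`-sets, swap the complements of the members of `T` for `T` itself: the family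
stays intersecting (a `k`-set can only miss a `(k+1)`-set that is its complement), and the number
of its sets avoiding `i` becomes `∑_{j=k+1}^{2k} C(2k, j) + |T| - 2 deg_T(i)`. So the diversity
exceeds Huang's bound as soon as `|T| > 2 Δ(T)`, which a regular intersecting family of 36
four-sets of `[9]` achieves: `93 + 36 - 2 * 16 = 97`.
-/

open Finset

section
variable {α : Type*}

def upperHalf (S : Finset α) (k : ℕ) : Finset (Finset α) := {A ∈ S.powerset | k < #A}

lemma card_upperHalf (X : Finset α) (k : ℕ) :
    #(upperHalf X k) = ∑ j ∈ Icc (k + 1) #X, (#X).choose j := by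
  rw [card_eq_sum_card_fiberwise (f := card) (t := Icc (k + 1) #X)]
  · refine sum_congr rfl fun j hj => ?_
    rw [← card_powersetCard, powersetCard_eq_filter, upperHalf, filter_filter]
    congr 1
    refine filter_congr fun A _ => ?_
    rw [mem_Icc] at hj
    constructor <;> rintro ⟨_, rfl⟩ <;> omega
  · intro A hA
    rw [mem_coe, upperHalf, mem_filter, mem_powerset] at hA
    exact mem_Icc.2 ⟨hA.2, card_le_card hA.1⟩

variable [DecidableEq α]

lemma filter_notMem_upperHalf (S : Finset α) (k : ℕ) (i : α) :
    {A ∈ upperHalf S k | i ∉ A} = upperHalf (S.erase i) k := by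
  ext A
  simp only [upperHalf, mem_filter, mem_powerset, subset_erase]
  tauto

lemma sdiff_mem_upperHalf {S A : Finset α} {k : ℕ} (hS : 2 * k + 1 ≤ #S)
    (hA : A ∈ S.powersetCard k) :
    S \ A ∈ upperHalf S k := by
  rw [mem_powersetCard] at hA
  rw [upperHalf, mem_filter, mem_powerset, card_sdiff_of_subset hA.1]
  exact ⟨sdiff_subset, by omega⟩

lemma upperHalf_intersecting {S : Finset α} {k : ℕ} (hS : #S ≤ 2 * k + 1) :
    (upperHalf S k : Set (Finset α)).Intersecting := by
  intro A hA B hB hAB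
  simp only [upperHalf, mem_coe, mem_filter, mem_powerset] at hA hB
  have := card_le_card (union_subset hA.1 hB.1)
  rw [card_union_of_disjoint hAB] at this
  omega

def swapComplements (S : Finset α) (k : ℕ) (T : Finset (Finset α)) : Finset (Finset α) :=
  (upperHalf S k \ T.image (S \ ·)) ∪ T

lemma subset_of_mem_swapComplements {S A : Finset α} {k : ℕ} {T : Finset (Finset α)}
    (hT : T ⊆ S.powersetCard k) (hA : A ∈ swapComplements S k T) : A ⊆ S := by
  rcases mem_union.1 hA with hA | hA
  · exact mem_powerset.1 (mem_filter.1 (mem_sdiff.1 hA).1).1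
  · exact (mem_powersetCard.1 (hT hA)).1

lemma eq_sdiff_of_disjoint {S A B : Finset α} {k : ℕ} (hS : #S = 2 * k + 1)
    (hA : A ∈ S.powersetCard k) (hB : B ∈ upperHalf S k) (hAB : Disjoint A B) : B = S \ A := by
  rw [mem_powersetCard] at hA
  rw [upperHalf, mem_filter, mem_powerset] at hB
  refine eq_of_subset_of_card_le (subset_sdiff.2 ⟨hB.1, hAB.symm⟩) ?_
  rw [card_sdiff_of_subset hA.1]
  omega

lemma swapComplements_intersecting {S : Finset α} {k : ℕ} {T : Finset (Finset α)}
    (hS : #S = 2 * k + 1) (hT : T ⊆ S.powersetCard k) (hTi : (T : Set (Finset α)).Intersecting) :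
    (swapComplements S k T : Set (Finset α)).Intersecting := by
  have hmixed {A B : Finset α} (hA : A ∈ T) (hB : B ∈ upperHalf S k \ T.image (S \ ·)) :
      ¬Disjoint A B := fun hAB =>
    (mem_sdiff.1 hB).2 <| mem_image.2
      ⟨A, hA, (eq_sdiff_of_disjoint hS (hT hA) (mem_sdiff.1 hB).1 hAB).symm⟩
  intro A hA B hB
  rw [mem_coe, swapComplements, mem_union] at hA hB
  rcases hA with hA | hA <;> rcases hB with hB | hB
  · exact upperHalf_intersecting hS.le (mem_sdiff.1 hA).1 (mem_sdiff.1 hB).1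
  · exact fun hAB => hmixed hB hA hAB.symm
  · exact hmixed hA hB
  · exact hTi hA hB

lemma card_filter_notMem_swapComplements {S : Finset α} {k : ℕ} {T : Finset (Finset α)} {i : α}
    (hS : 2 * k + 1 ≤ #S) (hT : T ⊆ S.powersetCard k) (hi : i ∈ S) :
    #{A ∈ swapComplements S k T | i ∉ A} + 2 * #{A ∈ T | i ∈ A} =
      #(upperHalf (S.erase i) k) + #T := by
  set C := T.image (S \ ·)
  have hCU : C ⊆ upperHalf S k := image_subset_iff.2 fun A hA => sdiff_mem_upperHalf hS (hT hA)
  have hTU : Disjoint (upperHalf S k) T := disjoint_left.2 fun A hA hAT => by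
    rw [upperHalf, mem_filter] at hA
    exact (mem_powersetCard.1 (hT hAT)).2.not_gt hA.2
  have hC : #{B ∈ C | i ∉ B} = #{A ∈ T | i ∈ A} := by
    rw [filter_image, card_image_of_injOn]
    · exact congrArg card (filter_congr fun A _ => by simp [hi])
    · exact fun A hA B hB => (sdiff_right_inj (mem_powersetCard.1 (hT (mem_filter.1 hA).1)).1
        (mem_powersetCard.1 (hT (mem_filter.1 hB).1)).1).1
  have hsplit : {A ∈ swapComplements S k T | i ∉ A} =
      ({A ∈ upperHalf S k | i ∉ A} \ {B ∈ C | i ∉ B}) ∪ {A ∈ T | i ∉ A} := by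
    ext A
    simp only [swapComplements, mem_filter, mem_union, mem_sdiff]
    tauto
  rw [hsplit, card_union_of_disjoint (disjoint_filter_filter hTU |>.mono_left sdiff_subset),
    card_sdiff_of_subset (filter_subset_filter _ hCU), filter_notMem_upperHalf, hC,
    ← filter_notMem_upperHalf]
  have hCT : #{A ∈ T | i ∈ A} ≤ #{A ∈ upperHalf S k | i ∉ A} :=
    hC ▸ card_le_card (filter_subset_filter _ hCU)
  have := card_filter_add_card_filter_not (s := T) (fun A => i ∈ A)
  omega

end

lemma le_diversity {F : Finset (Finset ℕ)} {n r : ℕ} (hn : 0 < n)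
    (h : ∀ i ∈ Icc 1 n, r ≤ #{A ∈ F | i ∉ A}) : r ≤ diversity F n := by
  have hdeg (i : ℕ) : #{A ∈ F | i ∈ A} + #{A ∈ F | i ∉ A} = #F :=
    card_filter_add_card_filter_not _
  have hmax : maxDegree F n ≤ #F - r := Finset.sup_le fun i hi => by
    have := hdeg i; have := h i hi; omega
  have := hdeg 1; have := h 1 (mem_Icc.2 ⟨le_rfl, hn⟩)
  rw [diversity]
  omega

/-- An intersecting 2-(9,4,6) design: every pair of points lies in exactly six blocks, so every
point lies in 16 of the 36 blocks. -/
def intersectingDesign : Finset (Finset ℕ) :=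
  {{1, 2, 3, 4}, {1, 2, 3, 5}, {1, 2, 3, 6}, {1, 2, 4, 7}, {1, 2, 4, 9}, {1, 2, 5, 9},
   {1, 3, 4, 8}, {1, 3, 6, 8}, {1, 3, 6, 9}, {1, 4, 5, 7}, {1, 4, 7, 8}, {1, 5, 6, 8},
   {1, 5, 6, 9}, {1, 5, 7, 9}, {1, 6, 7, 8}, {1, 7, 8, 9}, {2, 3, 5, 7}, {2, 3, 5, 8},
   {2, 3, 6, 7}, {2, 4, 6, 7}, {2, 4, 6, 9}, {2, 4, 8, 9}, {2, 5, 6, 8}, {2, 5, 8, 9},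
   {2, 6, 7, 8}, {2, 7, 8, 9}, {3, 4, 5, 7}, {3, 4, 5, 8}, {3, 4, 6, 9}, {3, 4, 8, 9},
   {3, 5, 7, 9}, {3, 6, 7, 9}, {3, 7, 8, 9}, {4, 5, 6, 7}, {4, 5, 6, 8}, {4, 5, 6, 9}}

lemma intersectingDesign_subset : intersectingDesign ⊆ (Icc 1 9).powersetCard 4 := by
  intro A hA
  rw [mem_powersetCard]
  revert A
  decide

lemma intersectingDesign_intersecting :
    (intersectingDesign : Set (Finset ℕ)).Intersecting := by
  intro A hA B hB
  rw [mem_coe] at hA hB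
  revert A B
  decide

lemma card_intersectingDesign : #intersectingDesign = 36 := by decide

lemma card_filter_mem_intersectingDesign :
    ∀ i ∈ Icc 1 9, #{A ∈ intersectingDesign | i ∈ A} = 16 := by
  decide

/-- there is an intersecting family of subsets of [9] with diversity
at least 97 > 93 = Σ_{i=5}^{8} C(8,i). -/
theorem stmt_12 :
    (∃ F : Finset (Finset ℕ),
      (∀ A ∈ F, A ⊆ Finset.Icc 1 9) ∧
      (∀ A ∈ F, ∀ B ∈ F, (A ∩ B).Nonempty) ∧
      97 ≤ diversity F 9) ∧
    (∑ i ∈ Finset.Icc 5 8, Nat.choose 8 i) = 93 ∧ 93 < 97 := by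
  have huang : ∑ i ∈ Icc 5 8, Nat.choose 8 i = 93 := by decide
  have hS : #(Icc 1 9) = 2 * 4 + 1 := Nat.card_Icc 1 9
  refine ⟨⟨swapComplements (Icc 1 9) 4 intersectingDesign,
    fun A hA => subset_of_mem_swapComplements intersectingDesign_subset hA,
    fun A hA B hB => not_disjoint_iff_nonempty_inter.1 <|
      swapComplements_intersecting hS intersectingDesign_subset intersectingDesign_intersecting
        hA hB,
    le_diversity (by norm_num) fun i hi => ?_⟩, huang, by norm_num⟩
  have hcount := card_filter_notMem_swapComplements hS.ge intersectingDesign_subset hi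
  rw [card_upperHalf, card_erase_of_mem hi, hS, card_intersectingDesign,
    card_filter_mem_intersectingDesign i hi, show 2 * 4 + 1 - 1 = 8 from rfl, huang] at hcount
  omega
end

section
/- There exists an intersecting family F of subsets of [10] = {1,...,10} with diversity ρ(F) ≥ 197. In particular, since 197 > (1/2)·C(9,4) + Σ_{i=6}^{9} C(9,i) = 193, this disproves Huang's conjecture that for n = 2k with k not a power of 2, every intersecting family F ⊆ 2^[2k] satisfies ρ(F) ≤ (1/2)·C(2k−1,k−1) + Σ_{i=k+1}^{2k−1} C(2k−1,i), for k = 5. -/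
/-!
The family consists of all subsets of `[10]` containing one of 46 generators: twenty 4-sets and
twenty-six 5-sets, any two of which meet. Sets containing intersecting generators intersect, so the
family is intersecting; it has `2 ^ 9 = 512` members, and every element of `[10]` lies in exactly
315 of them, whence its diversity is `512 - 315 = 197`.
-/

open Finset

def ofMask (m : ℕ) : Finset ℕ := (m.bitIndices.map (· + 1)).toFinset

lemma mem_ofMask {m i : ℕ} : i ∈ ofMask m ↔ ∃ j, m.testBit j ∧ j + 1 = i := by
  simp [ofMask]

lemma succ_mem_ofMask {m j : ℕ} : j + 1 ∈ ofMask m ↔ m.testBit j := by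
  simp [mem_ofMask]

lemma zero_notMem_ofMask (m : ℕ) : 0 ∉ ofMask m := by
  simp [mem_ofMask]

lemma ofMask_injective : Function.Injective ofMask := fun a b h =>
  Nat.eq_of_testBit_eq fun j => by
    rw [Bool.eq_iff_iff, ← succ_mem_ofMask, ← succ_mem_ofMask, h]

lemma ofMask_zero : ofMask 0 = ∅ := by
  simp [ofMask]

lemma ofMask_land (a b : ℕ) : ofMask (a &&& b) = ofMask a ∩ ofMask b := by
  ext (_ | j)
  · simp [zero_notMem_ofMask]
  · simp [succ_mem_ofMask]

lemma ofMask_subset_ofMask {a b : ℕ} : ofMask a ⊆ ofMask b ↔ a &&& b = a := by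
  rw [← inter_eq_left, ← ofMask_land, ofMask_injective.eq_iff]

lemma inter_ofMask_nonempty {a b : ℕ} : (ofMask a ∩ ofMask b).Nonempty ↔ a &&& b ≠ 0 := by
  rw [nonempty_iff_ne_empty, ← ofMask_land, ← ofMask_zero, ofMask_injective.ne_iff]

lemma ofMask_subset_Icc {m n : ℕ} (hm : m < 2 ^ n) : ofMask m ⊆ Icc 1 n := by
  intro i hi
  obtain ⟨j, hj, rfl⟩ := mem_ofMask.1 hi
  have : j < n := (Nat.pow_lt_pow_iff_right (by norm_num)).1
    ((Nat.ge_two_pow_of_testBit hj).trans_lt hm)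
  simp only [mem_Icc]
  omega

lemma image_ofMask_range (n : ℕ) : (range (2 ^ n)).image ofMask = (Icc 1 n).powerset := by
  refine eq_of_subset_of_card_le ?_ ?_
  · simpa [image_subset_iff] using fun m hm => ofMask_subset_Icc hm
  · simp [card_image_of_injective _ ofMask_injective]

lemma card_filter_powerset_Icc (n : ℕ) (p : Finset ℕ → Prop) [DecidablePred p] :
    #{A ∈ (Icc 1 n).powerset | p A} = #{m ∈ range (2 ^ n) | p (ofMask m)} := by
  rw [← image_ofMask_range, filter_image, card_image_of_injective _ ofMask_injective]

-- Bit `j` of a mask, counted from the right, stands for the element `j + 1`.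
def generatorMasks : List ℕ :=
  [0b0000100111, 0b1000010011, 0b0010100011, 0b0001100101, 0b0100011001,
   0b1100001001, 0b1001010001, 0b0011100001, 0b0001001110, 0b0101000110,
   0b0011001010, 0b1000110010, 0b0111000010, 0b0010011100, 0b1010001100,
   0b0110010100, 0b1110000100, 0b0100111000, 0b1100101000, 0b1001110000,
   0b0100010111, 0b0010011011, 0b0100101011, 0b0101001011, 0b1010001011,
   0b0100101101, 0b1001001101, 0b0010110101, 0b1010010101, 0b0110100101,
   0b1101000101, 0b0011011001, 0b1111000001, 0b1000101110, 0b0100110110,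
   0b1001010110, 0b1010010110, 0b0101011010, 0b1010101010, 0b1101010010,
   0b1110100010, 0b0001111100, 0b1001101100, 0b0011111000, 0b0111110000,
   0b1111100000]

def diverseFamily : Finset (Finset ℕ) :=
  {A ∈ (Icc 1 10).powerset | ∃ g ∈ generatorMasks, ofMask g ⊆ A}

lemma subset_Icc_of_mem_diverseFamily {A : Finset ℕ} (hA : A ∈ diverseFamily) :
    A ⊆ Icc 1 10 :=
  mem_powerset.1 (mem_filter.1 hA).1

lemma diverseFamily_intersecting :
    ∀ A ∈ diverseFamily, ∀ B ∈ diverseFamily, (A ∩ B).Nonempty := by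
  have generators_intersecting :
      ∀ g ∈ generatorMasks, ∀ g' ∈ generatorMasks, g &&& g' ≠ 0 := by decide
  simp only [diverseFamily, mem_filter]
  rintro A ⟨-, g, hg, hgA⟩ B ⟨-, g', hg', hgB⟩
  exact (inter_ofMask_nonempty.2 (generators_intersecting g hg g' hg')).mono
    (inter_subset_inter hgA hgB)

lemma card_diverseFamily : #diverseFamily = 512 := by
  rw [diverseFamily, card_filter_powerset_Icc 10]
  simp only [ofMask_subset_ofMask]
  decide +kernel

lemma maxDegree_diverseFamily_le : maxDegree diverseFamily 10 ≤ 315 := by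
  have degrees : ∀ j < 10,
      #{m ∈ range (2 ^ 10) | (∃ g ∈ generatorMasks, g &&& m = g) ∧ m.testBit j} ≤ 315 := by
    decide +kernel
  refine Finset.sup_le fun i hi => ?_
  obtain ⟨j, hj, rfl⟩ : ∃ j < 10, j + 1 = i := ⟨i - 1, by grind⟩
  rw [diverseFamily, filter_filter, card_filter_powerset_Icc 10]
  simpa only [ofMask_subset_ofMask, succ_mem_ofMask] using degrees j hj

/-- there is an intersecting family of subsets of [10] with diversity
at least 197 > 193 = (1/2)·C(9,4) + Σ_{i=6}^{9} C(9,i). -/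
theorem stmt_13 :
    (∃ F : Finset (Finset ℕ),
      (∀ A ∈ F, A ⊆ Finset.Icc 1 10) ∧
      (∀ A ∈ F, ∀ B ∈ F, (A ∩ B).Nonempty) ∧
      197 ≤ diversity F 10) ∧
    Nat.choose 9 4 / 2 + (∑ i ∈ Finset.Icc 6 9, Nat.choose 9 i) = 193 ∧ 193 < 197 := by
  refine ⟨⟨diverseFamily, fun _ => subset_Icc_of_mem_diverseFamily,
    diverseFamily_intersecting, ?_⟩, by decide, by norm_num⟩
  have := maxDegree_diverseFamily_le
  rw [diversity, card_diverseFamily]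
  omega
end

section
/- Let H = {F ⊆ [8] : |F| = 4, |F ∩ {1,2,3,4}| ≥ 2, |F ∩ {5,6,7,8}| ≥ 1}. Then (i) for every x ∈ [8], the star {F ∈ H : x ∈ F} has at most 30 members, and (ii) there exists an intersecting family F ⊆ H with |F| ≥ 34. Consequently H does not have the EKR property, disproving the conjecture of Frankl–Han–Huang–Zhao. -/
/-- A family of sets is intersecting if any two members meet. -/
def Intersecting' (F : Finset (Finset ℕ)) : Prop :=
  ∀ A ∈ F, ∀ B ∈ F, (A ∩ B).Nonempty

/-- A family is trivially intersecting (a star) if all members share a fixed element. -/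
def IsStar (F : Finset (Finset ℕ)) : Prop := ∃ x, ∀ A ∈ F, x ∈ A

/-- H has the EKR property: every intersecting subfamily of maximum size is a star. -/
def HasEKR (H : Finset (Finset ℕ)) : Prop :=
  ∀ F ⊆ H, Intersecting' F → (∀ G ⊆ H, Intersecting' G → G.card ≤ F.card) → IsStar F

def H14 : Finset (Finset ℕ) :=
  (Finset.Icc 1 8).powerset.filter
    (fun A => A.card = 4 ∧ 2 ≤ (A ∩ ({1,2,3,4} : Finset ℕ)).card ∧
      1 ≤ (A ∩ ({5,6,7,8} : Finset ℕ)).card)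

/-!
The members of `H14` meeting `{1, 2, 3}` in at least two points form an intersecting family,
since two 2-subsets of a 3-set always meet; there are 34 of them, while a direct count bounds
every star of `H14` by 30. A maximum intersecting subfamily is therefore larger than any star.
-/

open Finset

theorem intersecting_filter_le_card_inter (H : Finset (Finset ℕ)) (T : Finset ℕ) {k : ℕ}
    (hT : T.card < 2 * k) : Intersecting' (H.filter fun A => k ≤ (A ∩ T).card) := by
  intro A hA B hB
  have hAT := (mem_filter.mp hA).2
  have hBT := (mem_filter.mp hB).2
  have hpigeon : T.card < (A ∩ T).card + (B ∩ T).card := by omega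
  exact (inter_nonempty_of_card_lt_card_add_card inter_subset_right inter_subset_right
    hpigeon).mono (inter_subset_inter inter_subset_left inter_subset_left)

theorem exists_max_intersecting_subfamily (H : Finset (Finset ℕ)) :
    ∃ F ⊆ H, Intersecting' F ∧ ∀ G ⊆ H, Intersecting' G → G.card ≤ F.card := by
  classical
  obtain ⟨F, hF, hmax⟩ := (H.powerset.filter Intersecting').exists_max_image card
    ⟨∅, mem_filter.mpr ⟨empty_mem_powerset H, by simp [Intersecting']⟩⟩
  rw [mem_filter, mem_powerset] at hF
  exact ⟨F, hF.1, hF.2, fun G hGH hG => hmax G (mem_filter.mpr ⟨mem_powerset.mpr hGH, hG⟩)⟩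

theorem not_hasEKR_of_card_filter_mem_lt {H F : Finset (Finset ℕ)} (hFH : F ⊆ H)
    (hF : Intersecting' F) (hstar : ∀ x, (H.filter (x ∈ ·)).card < F.card) : ¬ HasEKR H := by
  intro hEKR
  obtain ⟨M, hMH, hM, hmax⟩ := exists_max_intersecting_subfamily H
  obtain ⟨x, hx⟩ := hEKR M hMH hM hmax
  have hM_star : M ⊆ H.filter (x ∈ ·) := fun A hA => mem_filter.mpr ⟨hMH hA, hx A hA⟩
  exact (hstar x).not_ge ((hmax F hFH hF).trans (card_le_card hM_star))

theorem card_filter_mem_H14_le (x : ℕ) : (H14.filter (x ∈ ·)).card ≤ 30 := by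
  by_cases hx : x ∈ Icc 1 8
  · revert x
    decide
  · have hempty : H14.filter (x ∈ ·) = ∅ :=
      filter_eq_empty_iff.mpr fun A hA hxA => hx (mem_powerset.mp (mem_filter.mp hA).1 hxA)
    simp [hempty]

theorem card_filter_H14_two_le_card_inter :
    (H14.filter fun A => 2 ≤ (A ∩ {1, 2, 3}).card).card = 34 := by
  decide

/-- every star in H14 has at most 30 members, yet H14 has an intersecting
subfamily of size at least 34; hence H14 fails the EKR property. -/
theorem stmt_14 :
    (∀ x ∈ Finset.Icc 1 8, (H14.filter (fun A => x ∈ A)).card ≤ 30) ∧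
    (∃ F ⊆ H14, Intersecting' F ∧ 34 ≤ F.card) ∧
    ¬ HasEKR H14 := by
  have hF := intersecting_filter_le_card_inter H14 {1, 2, 3} (k := 2) (by decide)
  have hcard := card_filter_H14_two_le_card_inter
  refine ⟨fun x _ => card_filter_mem_H14_le x,
    ⟨_, filter_subset _ _, hF, hcard.ge⟩,
    not_hasEKR_of_card_filter_mem_lt (filter_subset _ _) hF fun x => ?_⟩
  rw [hcard]
  exact (card_filter_mem_H14_le x).trans_lt (by norm_num)
end

section
/- Let H = {F ⊆ [7] : |F| = 4, |F ∩ {1,2,3}| ≥ 1, |F ∩ {4,5,6,7}| ≥ 2}. Then H is itself an intersecting family, |H| = 30, and for every x ∈ [7] the star {F ∈ H : x ∈ F} has at most 18 members; in particular H is intersecting but not trivially intersecting, so H does not have the EKR property. -/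
def H15 : Finset (Finset ℕ) :=
  (Finset.Icc 1 7).powerset.filter
    (fun A => A.card = 4 ∧ 1 ≤ (A ∩ ({1,2,3} : Finset ℕ)).card ∧
      2 ≤ (A ∩ ({4,5,6,7} : Finset ℕ)).card)

open Finset

theorem Intersecting'.not_hasEKR {H : Finset (Finset ℕ)} (hH : Intersecting' H)
    (hH_star : ¬ IsStar H) : ¬ HasEKR H :=
  fun hEKR => hH_star (hEKR H Subset.rfl hH fun _ hG _ => card_le_card hG)

theorem not_isStar_of_card_filter_mem_lt {F : Finset (Finset ℕ)} {S : Finset ℕ}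
    (hF : F.Nonempty) (hFS : ∀ A ∈ F, A ⊆ S)
    (hstar : ∀ x ∈ S, (F.filter (fun A => x ∈ A)).card < F.card) : ¬ IsStar F := by
  rintro ⟨x, hx⟩
  obtain ⟨A, hA⟩ := hF
  have hlt := hstar x (hFS A hA (hx A hA))
  rw [filter_true_of_mem hx] at hlt
  exact lt_irrefl _ hlt

theorem subset_Icc_of_mem_H15 {A : Finset ℕ} (hA : A ∈ H15) : A ⊆ Icc 1 7 :=
  mem_powerset.mp (mem_filter.mp hA).1

/- Two members disjoint on {4,5,6,7} would each meet it in exactly two points, hence meet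
{1,2,3} in two points, and two 2-subsets of a 3-set intersect. -/
theorem intersecting_H15 : Intersecting' H15 := by
  unfold Intersecting'
  decide

theorem card_H15 : H15.card = 30 := by
  decide

theorem card_filter_mem_H15_le :
    ∀ x ∈ Icc 1 7, (H15.filter (fun A => x ∈ A)).card ≤ 18 := by
  decide

/-- H15 is intersecting, has 30 members, every star in it has at most 18
members; so H15 is intersecting but not a star, and H15 fails the EKR property. -/
theorem stmt_15 :
    Intersecting' H15 ∧
    H15.card = 30 ∧
    (∀ x ∈ Finset.Icc 1 7, (H15.filter (fun A => x ∈ A)).card ≤ 18) ∧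
    ¬ IsStar H15 ∧
    ¬ HasEKR H15 := by
  have not_isStar : ¬ IsStar H15 :=
    not_isStar_of_card_filter_mem_lt (card_pos.mp (by rw [card_H15]; norm_num))
      (fun _ => subset_Icc_of_mem_H15)
      (fun x hx => (card_filter_mem_H15_le x hx).trans_lt (by rw [card_H15]; norm_num))
  exact ⟨intersecting_H15, card_H15, card_filter_mem_H15_le, not_isStar,
    intersecting_H15.not_hasEKR not_isStar⟩
end

section
/- The family F = {A ⊆ [9] : |A| ≥ 4} ∪ {A ⊆ [9] : |A| = 3} ∪ {A ⊆ [9] : |A| = 2 and A ∩ {1,2} ≠ ∅} of subsets of [9] = {1,...,9} has size |F| = 481 and contains no 4 pairwise disjoint members. In particular k(9,4) ≥ 481 > 480 = 4·k(7,4), disproving the conjecture of Frankl and Tokushige that k(n,s) = 4·k(n−2,s) whenever s ≥ 4 and n ≡ 1 (mod s). -/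
/-- `F` has `s` pairwise disjoint members: a subfamily of size `s` whose (distinct)
members are pairwise disjoint. -/
def HasSDisjoint (F : Finset (Finset ℕ)) (s : ℕ) : Prop :=
  ∃ G ∈ F.powerset, G.card = s ∧ ∀ A ∈ G, ∀ B ∈ G, A ≠ B → Disjoint A B

instance (F : Finset (Finset ℕ)) (s : ℕ) : Decidable (HasSDisjoint F s) := by
  unfold HasSDisjoint; infer_instance

/-- `kleitman n s` = k(n,s), the maximum size of a family of subsets of [n] = {1,…,n}
with no `s` pairwise disjoint members. -/
noncomputable def kleitman (n s : ℕ) : ℕ :=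
  (((Finset.Icc 1 n).powerset.powerset).filter (fun F => ¬ HasSDisjoint F s)).sup
    Finset.card

/-- The family {A ⊆ [9] : |A| ≥ 4} ∪ {A ⊆ [9] : |A| = 3}
∪ {A ⊆ [9] : |A| = 2, A ∩ {1,2} ≠ ∅}. -/
def F17 : Finset (Finset ℕ) :=
  ((Finset.Icc 1 9).powerset.filter (fun A => 4 ≤ A.card)) ∪
  ((Finset.Icc 1 9).powerset.filter (fun A => A.card = 3)) ∪
  ((Finset.Icc 1 9).powerset.filter
    (fun A => A.card = 2 ∧ (A ∩ ({1, 2} : Finset ℕ)).Nonempty))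

/-!
Four pairwise disjoint members of `F17` have total size at most `9`, so at least three of them
are pairs; but the pairs of `F17` all meet `{1, 2}`, so no three of them are disjoint.

For `k(7,4) ≤ 120`, split the `28` sets of size `1` and `2` into `7` blocks of `4` pairwise
disjoint sets. A family with no `4` disjoint members takes at most `3` sets from each block, and
at most `2` if it contains `∅`, which is disjoint from everything. Adding the `99` nonempty sets
outside the blocks gives `21 + 99 = 120`, or `1 + 14 + 99` when `∅` is a member. The sets of
size at least `2` show `k(7,4) ≥ 120`.
-/

open Finset

section Disjointness

variable {F G : Finset (Finset ℕ)} {s : ℕ}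

lemma hasSDisjoint_iff :
    HasSDisjoint F s ↔ ∃ G ⊆ F, #G = s ∧ (G : Set (Finset ℕ)).PairwiseDisjoint id := by
  simp only [HasSDisjoint, mem_powerset]
  rfl

lemma hasSDisjoint_of_subset (hGF : G ⊆ F) (hG : (G : Set (Finset ℕ)).PairwiseDisjoint id)
    (hs : s ≤ #G) : HasSDisjoint F s := by
  obtain ⟨G', hG'G, hG's⟩ := exists_subset_card_eq hs
  exact hasSDisjoint_iff.2 ⟨G', hG'G.trans hGF, hG's, hG.subset (coe_subset.2 hG'G)⟩

lemma card_inter_le_of_not_hasSDisjoint {t : Finset (Finset ℕ)}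
    (ht : (t : Set (Finset ℕ)).PairwiseDisjoint id) (hF : ¬ HasSDisjoint F (s + 1)) :
    #(F ∩ t) ≤ s := by
  by_contra! h
  exact hF (hasSDisjoint_of_subset inter_subset_left
    (ht.subset (coe_subset.2 inter_subset_right)) h)

lemma hasSDisjoint_succ_of_erase_empty (h : ∅ ∈ F) (hs : HasSDisjoint (F.erase ∅) s) :
    HasSDisjoint F (s + 1) := by
  obtain ⟨G, hGF, rfl, hG⟩ := hasSDisjoint_iff.1 hs
  have hG0 : ∅ ∉ G := fun h0 => (mem_erase.1 (hGF h0)).1 rfl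
  refine hasSDisjoint_iff.2 ⟨insert ∅ G, insert_subset h (hGF.trans (erase_subset _ _)),
    card_insert_of_notMem hG0, ?_⟩
  rw [coe_insert]
  exact hG.insert fun B _ _ => disjoint_empty_left B

end Disjointness

section Counting

variable {G : Finset (Finset ℕ)}

lemma sum_card_le_card_of_pairwiseDisjoint {S : Finset ℕ} (hGS : ∀ A ∈ G, A ⊆ S)
    (hG : (G : Set (Finset ℕ)).PairwiseDisjoint id) : ∑ A ∈ G, #A ≤ #S := by
  calc ∑ A ∈ G, #A = #(G.biUnion id) := (card_biUnion hG).symm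
    _ ≤ #S := card_le_card (biUnion_subset.2 hGS)

lemma card_le_card_of_pairwiseDisjoint_of_inter_nonempty {S : Finset ℕ}
    (hGS : ∀ A ∈ G, (A ∩ S).Nonempty) (hG : (G : Set (Finset ℕ)).PairwiseDisjoint id) :
    #G ≤ #S := by
  refine card_le_card_of_forall_subsingleton (fun A x => x ∈ A) (fun A hA => ?_) ?_
  · obtain ⟨x, hx⟩ := hGS A hA
    exact ⟨x, (mem_inter.1 hx).2, (mem_inter.1 hx).1⟩
  · intro x _ A ⟨hA, hxA⟩ B ⟨hB, hxB⟩
    by_contra hAB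
    exact disjoint_left.1 (hG hA hB hAB) hxA hxB

lemma not_hasSDisjoint_of_le_card {F : Finset (Finset ℕ)} {S : Finset ℕ} {m s : ℕ}
    (hFS : ∀ A ∈ F, A ⊆ S) (hF : ∀ A ∈ F, m ≤ #A) (hS : #S < m * s) :
    ¬ HasSDisjoint F s := by
  rw [hasSDisjoint_iff]
  rintro ⟨G, hGF, rfl, hG⟩
  have hsum := sum_card_le_card_of_pairwiseDisjoint (fun A hA => hFS A (hGF hA)) hG
  have hm : ∑ _A ∈ G, m ≤ ∑ A ∈ G, #A := sum_le_sum fun A hA => hF A (hGF hA)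
  rw [sum_const, smul_eq_mul] at hm
  lia

lemma three_mul_card_le_sum_card_add_card_filter (hG : ∀ A ∈ G, 2 ≤ #A) :
    3 * #G ≤ ∑ A ∈ G, #A + #{A ∈ G | #A = 2} := by
  rw [card_filter, ← sum_add_distrib, mul_comm, ← smul_eq_mul, ← sum_const]
  refine sum_le_sum fun A hA => ?_
  have := hG A hA
  split_ifs <;> lia

end Counting

section Kleitman

variable {n s : ℕ}

lemma card_le_kleitman {F : Finset (Finset ℕ)} (hF : F ⊆ (Icc 1 n).powerset)
    (h : ¬ HasSDisjoint F s) : #F ≤ kleitman n s :=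
  le_sup (mem_filter.2 ⟨mem_powerset.2 hF, h⟩)

lemma kleitman_le {m : ℕ}
    (h : ∀ F ⊆ (Icc 1 n).powerset, ¬ HasSDisjoint F s → #F ≤ m) : kleitman n s ≤ m :=
  Finset.sup_le fun F hF => (mem_filter.1 hF).elim fun hF hs => h F (mem_powerset.1 hF) hs

lemma card_inter_biUnion_le {F : Finset (Finset ℕ)} {T : Finset (Finset (Finset ℕ))}
    (hT : (T : Set (Finset (Finset ℕ))).PairwiseDisjoint id)
    (ht : ∀ t ∈ T, (t : Set (Finset ℕ)).PairwiseDisjoint id)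
    (hF : ¬ HasSDisjoint F (s + 1)) :
    #(F ∩ T.biUnion id) ≤ #T * s := by
  rw [inter_biUnion, card_biUnion fun t ht t' ht' htt' =>
    (hT ht ht' htt').mono inter_subset_right inter_subset_right]
  simpa using sum_le_sum fun t h => card_inter_le_of_not_hasSDisjoint (ht t h) hF

end Kleitman

/-- The matchings `{i - j, i + j} (mod 7)` of `K₇`, each completed by its missing vertex `{i}`. -/
def nearOneFactorization : Finset (Finset (Finset ℕ)) :=
  { {{1}, {2, 7}, {3, 6}, {4, 5}},
    {{2}, {1, 3}, {4, 7}, {5, 6}},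
    {{3}, {2, 4}, {1, 5}, {6, 7}},
    {{4}, {3, 5}, {2, 6}, {1, 7}},
    {{5}, {4, 6}, {3, 7}, {1, 2}},
    {{6}, {5, 7}, {1, 4}, {2, 3}},
    {{7}, {1, 6}, {2, 5}, {3, 4}} }

lemma card_nearOneFactorization : #nearOneFactorization = 7 := by decide

lemma pairwiseDisjoint_nearOneFactorization :
    (nearOneFactorization : Set (Finset (Finset ℕ))).PairwiseDisjoint id := by
  intro t ht t' ht' htt'
  revert t t'
  decide

lemma pairwiseDisjoint_of_mem_nearOneFactorization {t : Finset (Finset ℕ)}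
    (ht : t ∈ nearOneFactorization) : (t : Set (Finset ℕ)).PairwiseDisjoint id := by
  intro A hA B hB hAB
  revert t A B
  decide

lemma card_powerset_sdiff_nearOneFactorization :
    #(((Icc 1 7).powerset \ nearOneFactorization.biUnion id).erase ∅) = 99 := by decide

lemma card_le_of_subset_powerset_Icc_seven {F : Finset (Finset ℕ)} {s : ℕ}
    (hF : F ⊆ (Icc 1 7).powerset) (h0 : ∅ ∉ F) (hs : ¬ HasSDisjoint F (s + 1)) :
    #F ≤ 7 * s + 99 := by
  set U := nearOneFactorization.biUnion id
  have hin : #(F ∩ U) ≤ 7 * s := by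
    simpa [card_nearOneFactorization] using card_inter_biUnion_le
      pairwiseDisjoint_nearOneFactorization
      (fun _ ht => pairwiseDisjoint_of_mem_nearOneFactorization ht) hs
  have hout : #(F \ U) ≤ 99 := by
    rw [← card_powerset_sdiff_nearOneFactorization]
    refine card_le_card fun A hA => mem_erase.2 ⟨?_, sdiff_subset_sdiff hF le_rfl hA⟩
    rintro rfl
    exact h0 (mem_sdiff.1 hA).1
  rw [← card_inter_add_card_sdiff F U]
  lia

lemma kleitman_seven_four_le : kleitman 7 4 ≤ 120 := by
  refine kleitman_le fun F hF hF4 => ?_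
  by_cases h0 : ∅ ∈ F
  · have hF3 : ¬ HasSDisjoint (F.erase ∅) 3 :=
      fun h => hF4 (hasSDisjoint_succ_of_erase_empty h0 h)
    have hle := card_le_of_subset_powerset_Icc_seven ((erase_subset _ _).trans hF)
      (notMem_erase _ _) hF3
    have hcard := card_erase_add_one h0
    lia
  · exact card_le_of_subset_powerset_Icc_seven hF h0 hF4

set_option maxRecDepth 10000 in
lemma le_kleitman_seven_four : 120 ≤ kleitman 7 4 := by
  have h : ¬ HasSDisjoint ((Icc 1 7).powerset.filter (2 ≤ #·)) 4 :=
    not_hasSDisjoint_of_le_card (fun A hA => mem_powerset.1 (mem_filter.1 hA).1)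
      (fun A hA => (mem_filter.1 hA).2) (by simp)
  have hcard : #((Icc 1 7).powerset.filter (2 ≤ #·)) = 120 := by decide
  exact hcard ▸ card_le_kleitman (filter_subset _ _) h

set_option maxRecDepth 10000 in
lemma card_F17 : #F17 = 481 := by
  rw [F17, ← filter_or, ← filter_or]
  decide

lemma subset_Icc_of_mem_F17 {A : Finset ℕ} (hA : A ∈ F17) : A ⊆ Icc 1 9 := by
  simp only [F17, mem_union, mem_filter, mem_powerset] at hA
  tauto

lemma two_le_card_of_mem_F17 {A : Finset ℕ} (hA : A ∈ F17) : 2 ≤ #A := by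
  simp only [F17, mem_union, mem_filter] at hA
  lia

lemma inter_nonempty_of_mem_F17 {A : Finset ℕ} (hA : A ∈ F17) (h2 : #A = 2) :
    (A ∩ {1, 2}).Nonempty := by
  simp only [F17, mem_union, mem_filter] at hA
  rcases hA with (⟨-, h⟩ | ⟨-, h⟩) | ⟨-, -, h⟩
  · lia
  · lia
  · exact h

lemma not_hasSDisjoint_F17 : ¬ HasSDisjoint F17 4 := by
  rw [hasSDisjoint_iff]
  rintro ⟨G, hGF, hG4, hG⟩
  have hsum : ∑ A ∈ G, #A ≤ 9 := by
    simpa using sum_card_le_card_of_pairwiseDisjoint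
      (fun A hA => subset_Icc_of_mem_F17 (hGF hA)) hG
  have hpairs := three_mul_card_le_sum_card_add_card_filter
    fun A hA => two_le_card_of_mem_F17 (hGF hA)
  have hpairs_le : #{A ∈ G | #A = 2} ≤ #({1, 2} : Finset ℕ) :=
    card_le_card_of_pairwiseDisjoint_of_inter_nonempty
      (fun A hA => inter_nonempty_of_mem_F17 (hGF (mem_filter.1 hA).1) (mem_filter.1 hA).2)
      (hG.subset (coe_subset.2 (filter_subset _ _)))
  simp only [card_pair (show (1 : ℕ) ≠ 2 by decide)] at hpairs_le
  lia

lemma le_kleitman_nine_four : 481 ≤ kleitman 9 4 :=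
  card_F17 ▸ card_le_kleitman (fun _ hA => mem_powerset.2 (subset_Icc_of_mem_F17 hA))
    not_hasSDisjoint_F17

/-- F17 has size 481 and no 4 pairwise disjoint members; hence
k(9,4) ≥ 481 > 480 = 4·k(7,4), since k(7,4) = 120. -/
theorem stmt_17 :
    F17.card = 481 ∧
    ¬ HasSDisjoint F17 4 ∧
    481 ≤ kleitman 9 4 ∧
    kleitman 7 4 = 120 := by
  exact ⟨card_F17, not_hasSDisjoint_F17, le_kleitman_nine_four,
    kleitman_seven_four_le.antisymm le_kleitman_seven_four⟩
end
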